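/- arXiv:0704.2848 — 11 statements merged into one kernel-verified Lean document; each statement's English description precedes it below -/
import Mathlib

section
/- For all natural numbers m, k, m', k', one has the identity of R-linear endomorphisms of R[t]: P_{m,k} ∘ P_{m',k'} − P_{m',k'} ∘ P_{m,k} = Σ_{i≥1} (−1)^{i−1} · i! · (C(k,i)·C(m',i) − C(m,i)·C(k',i)) · h^i · P_{m+m'−i, k+k'−i}. (The sum is finite: the i-th term vanishes unless i ≤ min(k,m') or i ≤ min(m,k').) This is the commutation relation (main-com-rel) of the paper realized on the Weyl-type operators t^m(h d/dt)^k. -/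
open Polynomial

/-- `E = h·D`, the `R`-linear endomorphism `f ↦ h · D f` of `R[t]`,
where `D` is the formal derivative. -/
noncomputable def Eop (R : Type*) [CommRing R] (h : R) : Module.End R (Polynomial R) :=
  (LinearMap.mulLeft R (C h)).comp Polynomial.derivative

/-- `P_{m,k}(f) = E^k (t^m · f)`: multiplication by `t^m` followed by the
`k`-th iterate of `E = h·D`. -/
noncomputable def Pop (R : Type*) [CommRing R] (h : R) (m k : ℕ) :
    Module.End R (Polynomial R) :=
  (Eop R h ^ k).comp (LinearMap.mulLeft R (X ^ m))

section aux
variable {A : Type*} [Ring A]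

private lemma natid_aux (k m i : ℕ) :
    (i+1).factorial * (k+1).choose (i+1) * m.choose (i+1)
      = (i+1).factorial * k.choose (i+1) * m.choose (i+1)
        + i.factorial * k.choose i * m.choose i * (m - i) := by
  have h1 : i.factorial * k.choose i * m.choose i * (m - i)
      = i.factorial * k.choose i * (m.choose (i+1) * (i+1)) := by
    rw [mul_assoc, Nat.choose_succ_right_eq]
  rw [h1, Nat.choose_succ_succ, Nat.factorial_succ]
  ring

private lemma step_aux (a b z : A) (hab : a * b = b * a + z) (hzb : Commute z b) (j : ℕ) :
    a * b ^ (j + 1) = b ^ (j + 1) * a + (j + 1) • (z * b ^ j) := by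
  induction j with
  | zero => simpa using hab
  | succ n ih =>
    have h1 : a * b ^ (n + 2) = (a * b ^ (n + 1)) * b := by
      rw [mul_assoc, ← pow_succ]
    rw [h1, ih, add_mul, mul_assoc, hab, smul_mul_assoc, mul_assoc, ← pow_succ,
        mul_add, ← (hzb.pow_right (n+1)).eq, add_assoc, succ_nsmul' (z * b^(n+1)) (n+1)]
    rw [← mul_assoc, ← pow_succ]

private lemma step_sub (a b z : A) (hab : a * b = b * a + z) (hzb : Commute z b) (j : ℕ) :
    a * b ^ j = b ^ j * a + j • (z * b ^ (j - 1)) := by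
  cases j with
  | zero => simp
  | succ n => simpa using step_aux a b z hab hzb n

private lemma weyl_aux (a b z : A) (hab : a * b = b * a + z) (hza : Commute z a)
    (hzb : Commute z b) (k m : ℕ) :
    a ^ k * b ^ m = ∑ i ∈ Finset.range (k + 1),
      (i.factorial * k.choose i * m.choose i) • (z ^ i * (b ^ (m - i) * a ^ (k - i))) := by
  induction k with
  | zero => simp
  | succ k ih =>
    have lhs_eq : a ^ (k+1) * b ^ m
        = ∑ i ∈ Finset.range (k+1),
            ((i.factorial * k.choose i * m.choose i) •
                (z ^ i * (b ^ (m - i) * a ^ (k + 1 - i)))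
              + (i.factorial * k.choose i * m.choose i * (m - i)) •
                (z ^ (i+1) * (b ^ (m - (i+1)) * a ^ (k + 1 - (i+1))))) := by
      rw [pow_succ', mul_assoc, ih, Finset.mul_sum]
      refine Finset.sum_congr rfl fun i hi => ?_
      have hik : i ≤ k := Nat.lt_succ_iff.mp (Finset.mem_range.mp hi)
      have hcomm : a * (z ^ i * (b ^ (m - i) * a ^ (k - i)))
          = z ^ i * (a * (b ^ (m - i) * a ^ (k - i))) := by
        rw [← mul_assoc, ← (hza.pow_left i).eq, mul_assoc]
      have e1 : k - i + 1 = k + 1 - i := by omega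
      have e2 : k - i = k + 1 - (i + 1) := by omega
      have e3 : m - i - 1 = m - (i + 1) := by omega
      have hterm : a * (b ^ (m - i) * a ^ (k - i))
          = b ^ (m - i) * a ^ (k + 1 - i)
            + (m - i) • (z * (b ^ (m - (i+1)) * a ^ (k + 1 - (i+1)))) := by
        rw [← mul_assoc, step_sub a b z hab hzb (m - i), add_mul, mul_assoc,
          ← pow_succ', e1, smul_mul_assoc, mul_assoc, e2, e3]
      rw [mul_smul_comm, hcomm, hterm, mul_add, smul_add, mul_smul_comm, smul_smul,
        ← mul_assoc (z ^ i) z, ← pow_succ, mul_comm (i.factorial * k.choose i * m.choose i) (m - i),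
        mul_comm (m - i)]
    rw [lhs_eq, Finset.sum_add_distrib]
    rw [Finset.sum_range_succ' (fun j => ((j.factorial * (k+1).choose j * m.choose j) •
          (z ^ j * (b ^ (m - j) * a ^ (k + 1 - j))))) (k+1)]
    have hcoeff : ∀ i, (i+1).factorial * (k+1).choose (i+1) * m.choose (i+1)
        = (i+1).factorial * k.choose (i+1) * m.choose (i+1)
          + i.factorial * k.choose i * m.choose i * (m - i) := fun i => natid_aux k m i
    have key2 : ∑ i ∈ Finset.range (k+1),
        (((i+1).factorial * (k+1).choose (i+1) * m.choose (i+1)) •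
          (z ^ (i+1) * (b ^ (m - (i+1)) * a ^ (k + 1 - (i+1)))))
        = ∑ i ∈ Finset.range (k+1),
            ((((i+1).factorial * k.choose (i+1) * m.choose (i+1)) •
              (z ^ (i+1) * (b ^ (m - (i+1)) * a ^ (k + 1 - (i+1)))))
            + ((i.factorial * k.choose i * m.choose i * (m - i)) •
              (z ^ (i+1) * (b ^ (m - (i+1)) * a ^ (k + 1 - (i+1)))))) := by
      refine Finset.sum_congr rfl fun i _ => ?_
      rw [hcoeff i, add_smul]
    rw [key2, Finset.sum_add_distrib]
    have h0 : ∑ i ∈ Finset.range (k+1),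
        (((i+1).factorial * k.choose (i+1) * m.choose (i+1)) •
          (z ^ (i+1) * (b ^ (m - (i+1)) * a ^ (k + 1 - (i+1)))))
        + ((Nat.factorial 0 * k.choose 0 * m.choose 0) •
            (z ^ 0 * (b ^ (m - 0) * a ^ (k + 1 - 0))))
        = ∑ i ∈ Finset.range (k+2),
            ((i.factorial * k.choose i * m.choose i) •
              (z ^ i * (b ^ (m - i) * a ^ (k + 1 - i)))) := by
      rw [Finset.sum_range_succ' (fun j => ((j.factorial * k.choose j * m.choose j) •
          (z ^ j * (b ^ (m - j) * a ^ (k + 1 - j))))) (k+1)]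
    rw [Finset.sum_range_succ (fun j => ((j.factorial * k.choose j * m.choose j) •
        (z ^ j * (b ^ (m - j) * a ^ (k + 1 - j))))) (k+1)] at h0
    simp only [Nat.choose_succ_self, Nat.mul_zero, Nat.zero_mul, mul_zero, zero_mul,
      zero_smul, add_zero] at h0
    rw [← h0]
    simp only [Nat.choose_zero_right]
    abel

end aux

section app
variable {R : Type*} [CommRing R] (h : R)

private lemma hab_aux : LinearMap.mulLeft R (X : Polynomial R) * Eop R h
    = Eop R h * LinearMap.mulLeft R (X : Polynomial R)
      + (-(h • (1 : Module.End R (Polynomial R)))) := by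
  apply LinearMap.ext
  intro f
  simp only [Module.End.mul_apply, LinearMap.mulLeft_apply, Eop, LinearMap.coe_comp,
    Function.comp_apply, derivative_mul, derivative_X, one_mul, LinearMap.add_apply,
    LinearMap.neg_apply, LinearMap.smul_apply, Module.End.one_apply, mul_add,
    Polynomial.smul_eq_C_mul]
  ring

private lemma hz_comm (x : Module.End R (Polynomial R)) :
    Commute (-(h • (1 : Module.End R (Polynomial R)))) x :=
  (((Commute.one_left x).smul_left h)).neg_left

private lemma hzpow (i : ℕ) (Y : Module.End R (Polynomial R)) :
    (-(h • (1 : Module.End R (Polynomial R)))) ^ i * Y = ((-1 : ℤ) ^ i) • (h ^ i • Y) := by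
  have h1 : (-(h • (1 : Module.End R (Polynomial R)))) ^ i
      = ((-1 : ℤ) ^ i) • (h ^ i • (1 : Module.End R (Polynomial R))) := by
    rw [← neg_one_zsmul (h • (1 : Module.End R (Polynomial R))), _root_.smul_pow,
      _root_.smul_pow, one_pow]
  rw [h1, smul_mul_assoc, smul_mul_assoc, one_mul]

private lemma pop_eq (m k : ℕ) :
    Pop R h m k = Eop R h ^ k * (LinearMap.mulLeft R (X : Polynomial R)) ^ m := by
  rw [Pop, ← Module.End.mul_eq_comp, LinearMap.pow_mulLeft]

private lemma claimA (n m k m' k' : ℕ) (hm : m ≤ n) :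
    Pop R h m k * Pop R h m' k' =
      ∑ i ∈ Finset.range (n + 1),
        (((-1 : ℤ) ^ i * (i.factorial * m.choose i * k'.choose i : ℕ)) •
          (h ^ i • (Eop R h ^ (k + k' - i) *
            (LinearMap.mulLeft R (X : Polynomial R)) ^ (m + m' - i)))) := by
  have key := weyl_aux (LinearMap.mulLeft R (X : Polynomial R)) (Eop R h)
    (-(h • (1 : Module.End R (Polynomial R)))) (hab_aux h) (hz_comm h _) (hz_comm h _) m k'
  rw [pop_eq, pop_eq, mul_assoc, ← mul_assoc ((LinearMap.mulLeft R (X : Polynomial R)) ^ m),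
    key, Finset.sum_mul, Finset.mul_sum]
  rw [Finset.sum_subset (Finset.range_subset_range.mpr (Nat.succ_le_succ hm))
    (fun i _ hi => by
      have : m < i := by simpa [Nat.lt_succ_iff] using hi
      simp [Nat.choose_eq_zero_of_lt this])]
  refine Finset.sum_congr rfl fun i hi => ?_
  by_cases hle : i ≤ m ∧ i ≤ k'
  · obtain ⟨him, hik⟩ := hle
    rw [smul_mul_assoc, mul_smul_comm]
    have e1 : k + (k' - i) = k + k' - i := by omega
    have e2 : m - i + m' = m + m' - i := by omega
    rw [← mul_assoc (Eop R h ^ k), ← mul_assoc (Eop R h ^ k),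
      ← ((hz_comm h (Eop R h ^ k)).pow_left i).eq, mul_assoc, mul_assoc, hzpow,
      smul_mul_assoc, smul_mul_assoc, mul_assoc (Eop R h ^ (k' - i)),
      ← mul_assoc (Eop R h ^ k), ← pow_add, e1, ← pow_add, e2,
      smul_comm, ← Nat.cast_smul_eq_nsmul ℤ, smul_smul]
  · have : i.factorial * m.choose i * k'.choose i = 0 := by
      rcases not_and_or.mp hle with hx | hx
      · simp [Nat.choose_eq_zero_of_lt (by omega : m < i)]
      · simp [Nat.choose_eq_zero_of_lt (by omega : k' < i)]
    simp [this]

end app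

/-- The commutation relation (main-com-rel) realized on the Weyl-type operators
`t^m (h d/dt)^k`. -/
theorem stmt0 (R : Type*) [CommRing R] (h : R) (m k m' k' : ℕ) :
    Pop R h m k * Pop R h m' k' - Pop R h m' k' * Pop R h m k =
      ∑ i ∈ Finset.Icc 1 (k + k' + m + m'),
        ((-1 : ℤ) ^ (i - 1) * (i.factorial : ℤ) *
            ((k.choose i : ℤ) * (m'.choose i : ℤ) - (m.choose i : ℤ) * (k'.choose i : ℤ))) •
          (h ^ i • Pop R h (m + m' - i) (k + k' - i)) := by
  set N := k + k' + m + m' with hN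
  have hA := claimA h N m k m' k' (by omega)
  have hB := claimA h N m' k' m k (by omega)
  simp only [show k' + k = k + k' from add_comm k' k,
    show m' + m = m + m' from add_comm m' m] at hB
  rw [hA, hB, ← Finset.sum_sub_distrib]
  have hins : Finset.range (N + 1) = insert 0 (Finset.Icc 1 N) := by
    ext x
    simp [Nat.lt_succ_iff]
    omega
  rw [hins, Finset.sum_insert (by simp)]
  simp only [pow_zero, Nat.factorial_zero, Nat.choose_zero_right, mul_one, one_mul,
    Nat.cast_one, sub_self, zero_smul, zero_add]
  refine Finset.sum_congr rfl fun i hi => ?_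
  obtain ⟨j, rfl⟩ : ∃ j, i = j + 1 := by
    rcases Finset.mem_Icc.mp hi with ⟨h1, _⟩
    exact ⟨i - 1, by omega⟩
  rw [← sub_smul, pop_eq]
  congr 1
  push_cast
  ring
end

section
/- For all natural numbers m, k, n ≥ 1 and d ≥ 1, one has the identity of R-linear endomorphisms of R[t]: (ad E^n)^d(P_{m,k}) = Σ_{i≥d} (−1)^{i−d} · i! · C(m,i) · A_d(i,n) · h^i · P_{m−i, k+nd−i}, where (ad X)(Y) = X∘Y − Y∘X and the sum is finite (terms vanish unless d ≤ i ≤ min(m, nd)). Note E^n = P_{0,n}. This is the first iterated-adjoint formula in the proof of Lemma 3.1 (div-sum-lem(ii)) realized concretely. -/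
/-!
For a derivation `δ` of a commutative algebra, the Leibniz rule reads
`(q * ·) ∘ δ = δ ∘ (q * ·) + (-δ q * ·)`. Hence the operators
`Σ_{i ≤ K} s_i • δ^(K-i) ∘ ((-δ)^i q * ·)`, encoded by the polynomial `S = Σ s_i X^i`,
are stable under composition with `δ`: on the left it only raises the weight `K`, on the right
it multiplies `S` by `X + 1`. So `ad δ^n` multiplies `S` by `1 - (X + 1)^n`, and `(ad δ^n)^d`
by `(-1)^d ((X + 1)^n - 1)^d`, whose `i`-th coefficient is `(-1)^d A_d(i,n)` because
`(X + 1)^n - 1 = Σ_{j ≥ 1} C(n,j) X^j`. For `δ = E = h·D` one has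
`E^i t^m = i! C(m,i) h^i t^(m-i)`.
-/

open Polynomial

/-- `A_d(i,n) = Σ_{i₁+⋯+i_d = i, each i_s ≥ 1} C(n,i₁)⋯C(n,i_d)`, the sum over all
`d`-tuples of positive integers summing to `i` of products of binomial coefficients. -/
def Acoef (d i n : ℕ) : ℕ :=
  ∑ f ∈ (Finset.Nat.antidiagonalTuple d i).filter (fun f => ∀ s, 1 ≤ f s),
    ∏ s, n.choose (f s)

open Finset

namespace Finset.Nat

theorem sum_antidiagonalTuple_succ {M : Type*} [AddCommMonoid M] (k n : ℕ)
    (f : (Fin (k + 1) → ℕ) → M) :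
    ∑ x ∈ antidiagonalTuple (k + 1) n, f x =
      ∑ p ∈ antidiagonal n, ∑ x ∈ antidiagonalTuple k p.2, f (Fin.cons p.1 x) := by
  simp [Finset.sum, antidiagonalTuple, Multiset.Nat.antidiagonalTuple,
    List.Nat.antidiagonalTuple, Finset.HasAntidiagonal.antidiagonal, Multiset.Nat.antidiagonal,
    List.flatMap, List.map_flatten, List.sum_flatten, Function.comp_def]

end Finset.Nat

theorem coeff_X_add_one_pow_sub_one {T : Type*} [Ring T] (n j : ℕ) :
    ((X + 1 : T[X]) ^ n - 1).coeff j = if 1 ≤ j then (n.choose j : T) else 0 := by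
  rcases j with _ | j <;> simp [coeff_X_add_one_pow, coeff_one]

theorem Acoef_zero_left (i n : ℕ) : Acoef 0 i n = if i = 0 then 1 else 0 := by
  rcases i with _ | i <;> simp [Acoef, Nat.antidiagonalTuple_zero_succ]

theorem Acoef_succ_left (d l n : ℕ) :
    Acoef (d + 1) l n =
      ∑ p ∈ antidiagonal l, (if 1 ≤ p.1 then n.choose p.1 else 0) * Acoef d p.2 n := by
  simp only [Acoef, sum_filter, Nat.sum_antidiagonalTuple_succ, Fin.forall_fin_succ,
    Fin.cons_zero, Fin.cons_succ, Fin.prod_univ_succ, mul_sum, ite_mul, zero_mul, ite_and,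
    mul_ite, mul_zero]
  refine sum_congr rfl fun p _ => sum_congr rfl fun x _ => ?_
  split_ifs <;> rfl

theorem Acoef_eq_coeff {T : Type*} [Ring T] (d i n : ℕ) :
    (Acoef d i n : T) = (((X + 1 : T[X]) ^ n - 1) ^ d).coeff i := by
  induction d generalizing i with
  | zero => simp [Acoef_zero_left, coeff_one]
  | succ d ih =>
    rw [Acoef_succ_left, pow_succ', coeff_mul]
    push_cast
    simp only [coeff_X_add_one_pow_sub_one, ih]

theorem Acoef_eq_zero_of_notMem_Icc {d i n : ℕ} (hi : i ∉ Icc d (n * d)) : Acoef d i n = 0 := by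
  rw [← Nat.cast_eq_zero (R := ℤ), Acoef_eq_coeff]
  simp only [mem_Icc, not_and_or, not_le] at hi
  rcases hi with h | h
  · have hX : X ∣ (X + 1 : ℤ[X]) ^ n - 1 := by
      rw [X_dvd_iff, coeff_X_add_one_pow_sub_one]; simp
    exact (X_pow_dvd_iff.mp (pow_dvd_pow_of_dvd hX d)) i h
  · have : (((X + 1 : ℤ[X]) ^ n - 1) ^ d).natDegree ≤ n * d := by
      compute_degree; rw [mul_comm]
    exact coeff_eq_zero_of_natDegree_lt (by omega)

theorem coeff_one_sub_X_add_one_pow_pow_mul_neg_one_pow (d i n : ℕ) :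
    ((1 - (X + 1 : ℤ[X]) ^ n) ^ d).coeff i * (-1) ^ i = (-1) ^ (i - d) * Acoef d i n := by
  rw [show (1 - (X + 1 : ℤ[X]) ^ n) ^ d = C ((-1) ^ d) * ((X + 1) ^ n - 1) ^ d by
    rw [map_pow, map_neg, map_one, ← mul_pow]; ring, coeff_C_mul, ← Acoef_eq_coeff]
  by_cases hi : d ≤ i
  · obtain ⟨j, rfl⟩ := Nat.exists_eq_add_of_le hi
    have hsq : ((-1 : ℤ) ^ d) * (-1) ^ d = 1 := by rw [← pow_add, ← two_mul, pow_mul]; simp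
    rw [Nat.add_sub_cancel_left, pow_add]
    linear_combination ((Acoef d (d + j) n : ℤ) * (-1) ^ j) * hsq
  · have : Acoef d i n = 0 := Acoef_eq_zero_of_notMem_Icc (by simp; omega)
    simp [this]

namespace Derivation

variable {R A : Type*} [CommRing R] [CommRing A] [Algebra R A] (δ : Derivation R A A)

theorem mulLeft_mul_eq_mul_mulLeft_add (q : A) :
    LinearMap.mulLeft R q * (δ : Module.End R A) =
      δ * LinearMap.mulLeft R q + LinearMap.mulLeft R (-δ q) := by
  ext f
  simp [δ.leibniz]
  ring

noncomputable def weightedOp (q : A) (K : ℕ) : ℤ[X] →ₗ[ℤ] Module.End R A :=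
  ∑ i ∈ range (K + 1), (lcoeff ℤ i).smulRight
    ((δ : Module.End R A) ^ (K - i) * LinearMap.mulLeft R (((-(δ : Module.End R A)) ^ i) q))

variable {δ}

theorem weightedOp_apply (q : A) (K : ℕ) (S : ℤ[X]) :
    δ.weightedOp q K S = ∑ i ∈ range (K + 1), S.coeff i •
      ((δ : Module.End R A) ^ (K - i) *
        LinearMap.mulLeft R (((-(δ : Module.End R A)) ^ i) q)) := by
  simp [weightedOp]

theorem weightedOp_one (q : A) (K : ℕ) :
    δ.weightedOp q K 1 = (δ : Module.End R A) ^ K * LinearMap.mulLeft R q := by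
  simp [weightedOp_apply, coeff_one]

section Composition

variable {q : A} {K : ℕ} {S : ℤ[X]}

theorem mul_weightedOp (hS : S.natDegree ≤ K) :
    δ * δ.weightedOp q K S = δ.weightedOp q (K + 1) S := by
  rw [weightedOp_apply, weightedOp_apply, sum_range_succ _ (K + 1),
    coeff_eq_zero_of_natDegree_lt (by omega), zero_smul, add_zero, mul_sum]
  refine sum_congr rfl fun i hi => ?_
  rw [mul_smul_comm, ← mul_assoc, ← pow_succ',
    Nat.sub_add_comm (by simpa [Nat.lt_succ_iff] using hi)]

theorem weightedOp_mul (hS : S.natDegree ≤ K) :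
    δ.weightedOp q K S * δ = δ.weightedOp q (K + 1) ((X + 1) * S) := by
  have hXS : δ.weightedOp q (K + 1) (X * S) = ∑ i ∈ range (K + 1), S.coeff i •
      ((δ : Module.End R A) ^ (K - i) *
        LinearMap.mulLeft R (-δ (((-(δ : Module.End R A)) ^ i) q))) := by
    rw [weightedOp_apply, sum_range_succ']
    simp [coeff_X_mul, pow_succ']
  rw [add_mul, one_mul, map_add, hXS, ← mul_weightedOp hS, weightedOp_apply, sum_mul, mul_sum,
    ← sum_add_distrib]
  refine sum_congr rfl fun i _ => ?_
  rw [smul_mul_assoc, mul_smul_comm, ← smul_add, mul_assoc, mulLeft_mul_eq_mul_mulLeft_add,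
    mul_add, ← mul_assoc, ← pow_succ, ← mul_assoc, ← pow_succ', add_comm]

theorem pow_mul_weightedOp (hS : S.natDegree ≤ K) (n : ℕ) :
    (δ : Module.End R A) ^ n * δ.weightedOp q K S = δ.weightedOp q (K + n) S := by
  induction n with
  | zero => simp
  | succ n ih => rw [pow_succ', mul_assoc, ih, mul_weightedOp (by omega), add_assoc]

theorem weightedOp_mul_pow (hS : S.natDegree ≤ K) (n : ℕ) :
    δ.weightedOp q K S * (δ : Module.End R A) ^ n =
      δ.weightedOp q (K + n) ((X + 1) ^ n * S) := by
  induction n with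
  | zero => simp
  | succ n ih =>
    have hdeg : ((X + 1) ^ n * S).natDegree ≤ K + n := by
      have : ((X + 1 : ℤ[X]) ^ n).natDegree ≤ n := by compute_degree
      have := natDegree_mul_le (p := (X + 1 : ℤ[X]) ^ n) (q := S)
      omega
    rw [pow_succ, ← mul_assoc, ih, weightedOp_mul hdeg, ← mul_assoc, ← pow_succ', add_assoc]

theorem pow_mul_weightedOp_sub_weightedOp_mul_pow (hS : S.natDegree ≤ K) (n : ℕ) :
    (δ : Module.End R A) ^ n * δ.weightedOp q K S -
        δ.weightedOp q K S * (δ : Module.End R A) ^ n =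
      δ.weightedOp q (K + n) ((1 - (X + 1) ^ n) * S) := by
  rw [pow_mul_weightedOp hS, weightedOp_mul_pow hS, sub_mul, one_mul, map_sub]

theorem iterate_commutator_weightedOp (hS : S.natDegree ≤ K) (n d : ℕ) :
    (fun Y => (δ : Module.End R A) ^ n * Y - Y * (δ : Module.End R A) ^ n)^[d]
        (δ.weightedOp q K S) = δ.weightedOp q (K + n * d) ((1 - (X + 1) ^ n) ^ d * S) := by
  induction d with
  | zero => simp
  | succ d ih =>
    have hdeg : ((1 - (X + 1) ^ n) ^ d * S).natDegree ≤ K + n * d := by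
      have : ((1 - (X + 1 : ℤ[X]) ^ n) ^ d).natDegree ≤ n * d := by
        compute_degree; rw [mul_comm]
      have := natDegree_mul_le (p := (1 - (X + 1 : ℤ[X]) ^ n) ^ d) (q := S)
      omega
    rw [Function.iterate_succ_apply', ih, pow_mul_weightedOp_sub_weightedOp_mul_pow hdeg,
      ← mul_assoc, ← pow_succ', mul_add_one, add_assoc]

end Composition

theorem iterate_commutator_pow_mul_mulLeft (q : A) (k n d : ℕ) :
    (fun Y => (δ : Module.End R A) ^ n * Y - Y * (δ : Module.End R A) ^ n)^[d]
        ((δ : Module.End R A) ^ k * LinearMap.mulLeft R q) =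
      ∑ i ∈ Icc d (n * d), ((-1 : ℤ) ^ (i - d) * Acoef d i n) •
        ((δ : Module.End R A) ^ (k + n * d - i) *
          LinearMap.mulLeft R (((δ : Module.End R A) ^ i) q)) := by
  rw [← weightedOp_one, iterate_commutator_weightedOp (by simp), mul_one, weightedOp_apply]
  symm
  refine (sum_subset (fun i hi => ?_) (fun i _ hi => ?_)).trans (sum_congr rfl fun i _ => ?_)
  · simp only [mem_Icc, mem_range] at hi ⊢; omega
  · simp [Acoef_eq_zero_of_notMem_Icc hi]
  · have hneg : (-(δ : Module.End R A)) ^ i = (-1 : ℤ) ^ i • (δ : Module.End R A) ^ i := by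
      rw [zsmul_eq_mul]; push_cast; exact neg_pow (δ : Module.End R A) i
    rw [← coeff_one_sub_X_add_one_pow_pow_mul_neg_one_pow, hneg, LinearMap.smul_apply, mul_smul,
      ← mul_smul_comm]
    congr 2
    ext
    rw [LinearMap.smul_apply, LinearMap.mulLeft_apply, LinearMap.mulLeft_apply, smul_mul_assoc]

end Derivation

section Eop

variable {R : Type*} [CommRing R]

theorem coe_smul_derivative'_eq_Eop (h : R) :
    ((h • derivative' : Derivation R R[X] R[X]) : Module.End R R[X]) = Eop R h := by
  refine LinearMap.ext fun f => ?_
  simp [Eop, smul_eq_C_mul]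

theorem Eop_pow_apply (h : R) (i : ℕ) (f : R[X]) :
    (Eop R h ^ i) f = C (h ^ i) * derivative^[i] f := by
  induction i with
  | zero => simp
  | succ i ih =>
    rw [pow_succ', Module.End.mul_apply, ih, Function.iterate_succ_apply', Eop,
      LinearMap.comp_apply, derivative_C_mul, LinearMap.mulLeft_apply, ← mul_assoc, ← C_mul,
      pow_succ']

theorem Eop_pow_mul_mulLeft_Eop_pow_X_pow (h : R) (a i m : ℕ) :
    Eop R h ^ a * LinearMap.mulLeft R ((Eop R h ^ i) (X ^ m)) =
      ((i.factorial * m.choose i : ℕ) : ℤ) • h ^ i • Pop R h (m - i) a := by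
  have hmulLeft (c : R) (p : R[X]) :
      LinearMap.mulLeft R (C c * p) = c • LinearMap.mulLeft R p :=
    LinearMap.ext fun f => by simp [smul_eq_C_mul]
  rw [Eop_pow_apply, iterate_derivative_X_pow_eq_C_mul, ← mul_assoc, ← C_mul, hmulLeft,
    mul_smul_comm, Nat.descFactorial_eq_factorial_mul_choose, Pop, Module.End.mul_eq_comp]
  module

end Eop

theorem stmt3_general (R : Type*) [CommRing R] (h : R) (m k n d : ℕ) :
    (fun Y => Eop R h ^ n * Y - Y * Eop R h ^ n)^[d] (Pop R h m k) =
      ∑ i ∈ Finset.Icc d (m + n * d),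
        ((-1 : ℤ) ^ (i - d) * (i.factorial : ℤ) * (m.choose i : ℤ) * (Acoef d i n : ℤ)) •
          (h ^ i • Pop R h (m - i) (k + n * d - i)) := by
  rw [show Pop R h m k = Eop R h ^ k * LinearMap.mulLeft R (X ^ m) from rfl,
    ← coe_smul_derivative'_eq_Eop, Derivation.iterate_commutator_pow_mul_mulLeft,
    coe_smul_derivative'_eq_Eop]
  refine (sum_congr rfl fun i _ => ?_).trans
    (sum_subset (Icc_subset_Icc_right (by omega)) fun i _ hi => ?_)
  · rw [Eop_pow_mul_mulLeft_Eop_pow_X_pow, smul_smul]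
    congr 1
    push_cast
    ring
  · simp [Acoef_eq_zero_of_notMem_Icc hi]

/-- The first iterated-adjoint formula in the proof of Lemma 3.1 (div-sum-lem(ii))
realized concretely on `R[t]`:
`(ad E^n)^d(P_{m,k}) = Σ_{i≥d} (−1)^{i−d}·i!·C(m,i)·A_d(i,n)·h^i·P_{m−i,k+nd−i}`. -/
theorem stmt3 (R : Type*) [CommRing R] (h : R) (m k n d : ℕ) (hn : 1 ≤ n) (hd : 1 ≤ d) :
    (fun Y => Eop R h ^ n * Y - Y * Eop R h ^ n)^[d] (Pop R h m k) =
      ∑ i ∈ Finset.Icc d (m + n * d),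
        ((-1 : ℤ) ^ (i - d) * (i.factorial : ℤ) * (m.choose i : ℤ) * (Acoef d i n : ℤ)) •
          (h ^ i • Pop R h (m - i) (k + n * d - i)) :=
  stmt3_general R h m k n d
end

section
/- Let M be an abelian group equipped with additive endomorphisms (U_d)_{d≥0} and D such that U_0 = id, U_a ∘ U_b = C(a+b,a)·U_{a+b} for all a, b ≥ 0, D ∘ U_d − U_d ∘ D = U_{d−1} for all d ≥ 1, and for every x ∈ M there exists n with Dⁿx = 0. Then every x ∈ M can be written as a finite sum x = Σ_{i=0}^{r} U_i(a_i) with all a_i ∈ ker D. (Lemma 3.6 (div-mod-lem), u-case: M = M₀[u^{[•]}] for any ℤ[u^{[•]},∂_u]-module on which ∂_u is locally nilpotent.) -/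
/-- Lemma 3.6 (div-mod-lem), `u`-case: if an abelian group `M` carries operators
`U_d` (playing the role of the divided powers `u^{[d]}`) and `D` (playing the role of
`∂_u`) with `U_0 = id`, `U_a ∘ U_b = C(a+b,a)·U_{a+b}`, `[D, U_d] = U_{d−1}` for `d ≥ 1`,
and `D` locally nilpotent, then every `x ∈ M` is a finite sum `Σ_{i=0}^r U_i(a_i)`
with all `a_i ∈ ker D`. -/
theorem stmt8 (M : Type*) [AddCommGroup M] (U : ℕ → AddMonoid.End M) (D : AddMonoid.End M)
    (hU0 : U 0 = 1)
    (hUU : ∀ a b : ℕ, U a * U b = (a + b).choose a • U (a + b))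
    (hDU : ∀ d : ℕ, 1 ≤ d → D * U d - U d * D = U (d - 1))
    (hnil : ∀ x : M, ∃ n : ℕ, (D ^ n) x = 0) (x : M) :
    ∃ (r : ℕ) (a : ℕ → M), (∀ i, D (a i) = 0) ∧
      x = ∑ i ∈ Finset.range (r + 1), (U i) (a i) := by
  obtain ⟨n, hn⟩ := hnil x
  clear hnil hUU
  induction n generalizing x with
  | zero =>
    simp only [pow_zero, AddMonoid.End.coe_one, id_eq] at hn
    exact ⟨0, 0, by simp, by simp [hn]⟩
  | succ n ih =>
    have hDx : (D ^ n) (D x) = 0 := by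
      rw [pow_succ] at hn; exact hn
    obtain ⟨r, b, hb, hsum⟩ := ih (D x) hDx
    refine ⟨r + 1, fun i => Nat.rec (x - ∑ i ∈ Finset.range (r + 1), (U (i + 1)) (b i))
      (fun j _ => b j) i, ?_, ?_⟩
    · intro i
      cases i with
      | zero =>
        have key : ∀ i, D ((U (i + 1)) (b i)) = (U i) (b i) := by
          intro i
          have h : D * U (i + 1) = U i + U (i + 1) * D := by
            have h0 := sub_eq_iff_eq_add.mp (hDU (i + 1) (by omega))
            simpa using h0
          have h2 : D ((U (i + 1)) (b i)) = (U i) (b i) + (U (i + 1)) (D (b i)) :=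
            DFunLike.congr_fun h (b i)
          rw [h2, hb i, map_zero, add_zero]
        show D (x - ∑ i ∈ Finset.range (r + 1), (U (i + 1)) (b i)) = 0
        simp only [map_sub, map_sum, key, hsum, sub_self]
      | succ j => exact hb j
    · rw [Finset.sum_range_succ']
      show x = (∑ i ∈ Finset.range (r + 1), (U (i + 1)) (b i)) +
        (U 0) (x - ∑ i ∈ Finset.range (r + 1), (U (i + 1)) (b i))
      rw [hU0]
      simp
end

section
/- Let M be an abelian group equipped with additive endomorphisms T and (E_d)_{d≥0} such that E_0 = id, E_a ∘ E_b = C(a+b,a)·E_{a+b} for all a, b ≥ 0, E_d ∘ T − T ∘ E_d = E_{d−1} for all d ≥ 1, and for every x ∈ M there exists N with E_d x = 0 for all d ≥ N. Set M₀ = {x ∈ M : E_d x = 0 for all d ≥ 1}. Then every x ∈ M can be written as a finite sum x = Σ_{i=0}^{r} T^i(a_i) with all a_i ∈ M₀. (Lemma 3.6 (div-mod-lem), t-case: M = M₀[t] for any ℤ[t,∂_t^{[•]}]-module on which the divided powers ∂_t^{[n]} are locally nilpotent.) -/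
/-- Lemma 3.6 (div-mod-lem), `t`-case: if an abelian group `M` carries operators `T`
(playing the role of multiplication by `t`) and `E_d` (playing the role of the divided
powers `∂_t^{[d]}`) with `E_0 = id`, `E_a ∘ E_b = C(a+b,a)·E_{a+b}`,
`[E_d, T] = E_{d−1}` for `d ≥ 1`, and the `E_d` locally nilpotent, then every `x ∈ M`
is a finite sum `Σ_{i=0}^r T^i(a_i)` with all `a_i` killed by all `E_d`, `d ≥ 1`. -/
theorem stmt9 (M : Type*) [AddCommGroup M] (T : AddMonoid.End M) (E : ℕ → AddMonoid.End M)
    (hE0 : E 0 = 1)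
    (hEE : ∀ a b : ℕ, E a * E b = (a + b).choose a • E (a + b))
    (hET : ∀ d : ℕ, 1 ≤ d → E d * T - T * E d = E (d - 1))
    (hnil : ∀ x : M, ∃ N : ℕ, ∀ d : ℕ, N ≤ d → (E d) x = 0) (x : M) :
    ∃ (r : ℕ) (a : ℕ → M), (∀ i, ∀ d : ℕ, 1 ≤ d → (E d) (a i) = 0) ∧
      x = ∑ i ∈ Finset.range (r + 1), (T ^ i) (a i) := by
  have mul_apply : ∀ (f g : AddMonoid.End M) (z : M), (f * g) z = f (g z) := fun _ _ _ => rfl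
  -- Key computation: for y ∈ M₀, E d (T^k y) = C(k,d) • T^(k-d) y
  have lem : ∀ (y : M), (∀ d : ℕ, 1 ≤ d → E d y = 0) → ∀ (k d : ℕ),
      E d ((T ^ k) y) = k.choose d • (T ^ (k - d)) y := by
    intro y hy k
    induction k with
    | zero =>
      intro d
      cases d with
      | zero => simp [hE0]
      | succ e => simp [hy (e + 1) (by omega)]
    | succ k ih =>
      intro d
      cases d with
      | zero => simp [hE0]
      | succ e =>
        have h1 : E (e + 1) * T = E e + T * E (e + 1) := by
          have h := hET (e + 1) (by omega)
          simp only [Nat.add_sub_cancel] at h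
          rw [sub_eq_iff_eq_add] at h
          exact h
        have h2 : (T ^ (k + 1)) y = T ((T ^ k) y) := by rw [pow_succ']; rfl
        rw [h2, ← mul_apply, h1]
        have h3 : (E e + T * E (e + 1)) ((T ^ k) y)
            = E e ((T ^ k) y) + T (E (e + 1) ((T ^ k) y)) := rfl
        rw [h3, ih e, ih (e + 1), map_nsmul]
        rcases le_or_gt (e + 1) k with h | h
        · have he : k - (e + 1) + 1 = k - e := by omega
          have h4 : T ((T ^ (k - (e + 1))) y) = (T ^ (k - e)) y := by
            rw [← mul_apply, ← pow_succ', he]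
          rw [h4]
          have h5 : k + 1 - (e + 1) = k - e := by omega
          rw [h5, ← add_smul, Nat.choose_succ_succ']
        · have h5 : k + 1 - (e + 1) = k - e := by omega
          rw [h5, Nat.choose_succ_succ', Nat.choose_eq_zero_of_lt h]
          simp
  have key : ∀ N : ℕ, ∀ z : M, (∀ d : ℕ, N ≤ d → E d z = 0) →
      ∃ (r : ℕ) (a : ℕ → M), (∀ i, ∀ d : ℕ, 1 ≤ d → (E d) (a i) = 0) ∧
        z = ∑ i ∈ Finset.range (r + 1), (T ^ i) (a i) := by
    intro N
    induction N with
    | zero =>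
      intro z hz
      have hz0 : z = 0 := by
        have := hz 0 le_rfl
        rwa [hE0] at this
      exact ⟨0, fun _ => 0, by simp, by simp [hz0]⟩
    | succ n ih =>
      intro z hz
      set y := E n z with hy
      have hy0 : ∀ d : ℕ, 1 ≤ d → E d y = 0 := by
        intro d hd
        have h := congrArg (fun f : AddMonoid.End M => f z) (hEE d n)
        simp only [mul_apply] at h
        have h2 : ((d + n).choose d • E (d + n)) z = (d + n).choose d • (E (d + n) z) := rfl
        rw [h2, hz (d + n) (by omega), smul_zero] at h
        exact h
      have hz' : ∀ d : ℕ, n ≤ d → E d (z - (T ^ n) y) = 0 := by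
        intro d hd
        rw [map_sub, lem y hy0 n d]
        rcases eq_or_lt_of_le hd with rfl | hlt
        · rw [Nat.choose_self, one_smul, Nat.sub_self, pow_zero, ← hy]
          simp
        · rw [Nat.choose_eq_zero_of_lt hlt, zero_smul, sub_zero]
          exact hz d (by omega)
      obtain ⟨r, a, ha, heq⟩ := ih (z - (T ^ n) y) hz'
      refine ⟨r + n, fun i => (if i ≤ r then a i else 0) + (if i = n then y else 0), ?_, ?_⟩
      · intro i d hd
        rw [map_add]
        split_ifs <;> simp [ha _ d hd, hy0 d hd]
      · have hsplit : z = (z - (T ^ n) y) + (T ^ n) y := by abel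
        rw [hsplit, heq]
        have hsum : ∑ i ∈ Finset.range (r + n + 1),
            (T ^ i) ((if i ≤ r then a i else 0) + (if i = n then y else 0))
            = (∑ i ∈ Finset.range (r + n + 1), (T ^ i) (if i ≤ r then a i else 0))
              + ∑ i ∈ Finset.range (r + n + 1), (T ^ i) (if i = n then y else 0) := by
          rw [← Finset.sum_add_distrib]
          exact Finset.sum_congr rfl fun i _ => map_add _ _ _
        rw [hsum]
        congr 1
        · have hc : ∑ i ∈ Finset.range (r + 1), (T ^ i) (a i)
              = ∑ i ∈ Finset.range (r + 1), (T ^ i) (if i ≤ r then a i else 0) :=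
            Finset.sum_congr rfl fun i hi => by
              rw [if_pos (Nat.lt_succ_iff.1 (Finset.mem_range.1 hi))]
          rw [hc]
          refine Finset.sum_subset (Finset.range_subset_range.2 (by omega)) ?_
          intro i _ hi
          rw [if_neg fun h => hi (Finset.mem_range.2 (by omega)), map_zero]
        · rw [Finset.sum_eq_single n]
          · rw [if_pos rfl]
          · intro b _ hb
            rw [if_neg hb, map_zero]
          · intro hn
            exact absurd (Finset.mem_range.2 (by omega)) hn
  obtain ⟨N, hN⟩ := hnil x
  exact key N x hN
end

section
/- The map from the group of finitely supported families (a_{m,n})_{(m,n)∈ℕ×ℕ} with a_{m,n} ∈ M₀ to M, sending (a_{m,n}) to Σ_{(m,n)} T^m(U_n(a_{m,n})), is an isomorphism of abelian groups. (Proposition 3.8 (Heis-mod-prop)(i): M ≅ M₀[t,u^{[•]}] as a module over ℤ[t, u^{[•]}, ∂_t^{[•]}, ∂_u].) -/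
/-!
The operators `E m ∘ D ^ n` extract coefficients: on a monomial `T^m' (U n' v)` with `v ∈ M₀`
they give `C(m', m) • T^(m' - m) (U (n' - n) v)`, and zero when `n > n'`. Applied at the
lexicographically largest index of a nonzero family they return its (nonzero) coefficient
there, which gives injectivity.

For surjectivity, if `D x = 0` and `E d x = 0` for `d > k`, then `E k x ∈ M₀` and
`x - T^k (E k x)` is killed by `D` and by every `E d` with `d ≥ k`; induction on `k` puts
`ker D` in the image. Since `D (T^m (U (n + 1) v)) = T^m (U n v)`, `D` maps the image onto
itself, and induction on the nilpotency order of `D` reaches every element.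
-/

section

variable {M : Type*} [AddCommGroup M]

theorem apply_apply_of_commutator_eq {A B C : AddMonoid.End M} (h : A * B - B * A = C) (x : M) :
    A (B x) = B (A x) + C x :=
  eq_add_of_sub_eq' (DFunLike.congr_fun h x)

theorem pow_apply_dividedPower_apply {D : AddMonoid.End M} {U : ℕ → AddMonoid.End M}
    (hU0 : U 0 = 1) (hDU : ∀ d : ℕ, 1 ≤ d → D * U d - U d * D = U (d - 1))
    {x : M} (hx : D x = 0) (n k : ℕ) :
    (D ^ n) (U k x) = if n ≤ k then U (k - n) x else 0 := by
  have hD : ∀ k, D (U k x) = if k = 0 then 0 else U (k - 1) x := by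
    rintro (_ | k)
    · simpa [hU0] using hx
    · simp [apply_apply_of_commutator_eq (hDU (k + 1) k.succ_pos), hx]
  induction n generalizing k with
  | zero => simp
  | succ n ih =>
    rw [pow_succ, AddMonoid.End.coe_mul, Function.comp_apply, hD]
    rcases k with _ | k
    · simp
    · simp [ih, Nat.add_sub_add_right]

theorem dividedDeriv_apply_pow_apply {T : AddMonoid.End M} {E : ℕ → AddMonoid.End M}
    (hE0 : E 0 = 1) (hET : ∀ d : ℕ, 1 ≤ d → E d * T - T * E d = E (d - 1))
    {x : M} (hx : ∀ d : ℕ, 1 ≤ d → E d x = 0) (m d : ℕ) :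
    E d ((T ^ m) x) = m.choose d • (T ^ (m - d)) x := by
  induction m generalizing d with
  | zero =>
    rcases d with _ | d
    · simp [hE0]
    · simp [hx (d + 1) d.succ_pos]
  | succ m ih =>
    rcases d with _ | d
    · simp [hE0]
    have hshift : m.choose (d + 1) • T ((T ^ (m - (d + 1))) x) =
        m.choose (d + 1) • (T ^ (m - d)) x := by
      rcases lt_or_ge d m with hdm | hmd
      · rw [show m - d = m - (d + 1) + 1 by omega, pow_succ']
        rfl
      · simp [Nat.choose_eq_zero_of_lt (Nat.lt_succ_of_le hmd)]
    rw [pow_succ', AddMonoid.End.coe_mul, Function.comp_apply,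
      apply_apply_of_commutator_eq (hET (d + 1) d.succ_pos), ih, ih, map_nsmul, hshift,
      Nat.choose_succ_succ', add_nsmul, add_comm]
    simp only [Nat.add_sub_cancel, Nat.add_sub_add_right]

theorem dividedDeriv_pow_apply_monomial {T D : AddMonoid.End M} {U E : ℕ → AddMonoid.End M}
    (hU0 : U 0 = 1) (hE0 : E 0 = 1) (hEU : ∀ d e : ℕ, Commute (E d) (U e)) (hDT : Commute D T)
    (hDU : ∀ d : ℕ, 1 ≤ d → D * U d - U d * D = U (d - 1))
    (hET : ∀ d : ℕ, 1 ≤ d → E d * T - T * E d = E (d - 1))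
    {v : M} (hvD : D v = 0) (hvE : ∀ d : ℕ, 1 ≤ d → E d v = 0) (m n m' n' : ℕ) :
    E m ((D ^ n) ((T ^ m') (U n' v))) =
      if n ≤ n' then m'.choose m • (T ^ (m' - m)) (U (n' - n) v) else 0 := by
  rw [show (D ^ n) ((T ^ m') (U n' v)) = (T ^ m') ((D ^ n) (U n' v)) from
    DFunLike.congr_fun (hDT.pow_pow n m').eq _, pow_apply_dividedPower_apply hU0 hDU hvD]
  split_ifs
  · refine dividedDeriv_apply_pow_apply hE0 hET (fun d hd => ?_) m' m
    rw [show E d (U (n' - n) v) = U (n' - n) (E d v) from DFunLike.congr_fun (hEU d _).eq v,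
      hvE d hd, map_zero]
  · simp

noncomputable def monomialSum (T : AddMonoid.End M) (U : ℕ → AddMonoid.End M)
    (M₀ : AddSubgroup M) : ((ℕ × ℕ) →₀ M₀) →+ M :=
  Finsupp.liftAddHom fun p => (T ^ p.1 * U p.2).comp M₀.subtype

section monomialSum

variable {T D : AddMonoid.End M} {U E : ℕ → AddMonoid.End M} {M₀ : AddSubgroup M}

theorem monomialSum_apply (a : (ℕ × ℕ) →₀ M₀) :
    monomialSum T U M₀ a = a.sum fun p v => (T ^ p.1) (U p.2 (v : M)) :=
  Finsupp.liftAddHom_apply _ a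

theorem monomialSum_single (p : ℕ × ℕ) (v : M₀) :
    monomialSum T U M₀ (Finsupp.single p v) = (T ^ p.1) (U p.2 (v : M)) :=
  Finsupp.liftAddHom_apply_single _ p v

theorem monomialSum_injective (hU0 : U 0 = 1) (hE0 : E 0 = 1)
    (hEU : ∀ d e : ℕ, Commute (E d) (U e)) (hDT : Commute D T)
    (hDU : ∀ d : ℕ, 1 ≤ d → D * U d - U d * D = U (d - 1))
    (hET : ∀ d : ℕ, 1 ≤ d → E d * T - T * E d = E (d - 1))
    (hM₀ : ∀ v ∈ M₀, D v = 0 ∧ ∀ d : ℕ, 1 ≤ d → E d v = 0) :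
    Function.Injective (monomialSum T U M₀) := by
  have key (m n : ℕ) (p : ℕ × ℕ) (v : M₀) := dividedDeriv_pow_apply_monomial
    hU0 hE0 hEU hDT hDU hET (hM₀ v v.2).1 (hM₀ v v.2).2 m n p.1 p.2
  rw [injective_iff_map_eq_zero]
  intro a ha
  by_contra hne
  obtain ⟨p, hp, hmax⟩ :=
    a.support.exists_max_image toLex (Finsupp.support_nonempty_iff.mpr hne)
  have hcoeff : E p.1 ((D ^ p.2) (monomialSum T U M₀ a)) = a p := by
    rw [monomialSum_apply, Finsupp.sum, map_sum, map_sum, Finset.sum_eq_single_of_mem p hp]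
    · rw [key, if_pos le_rfl, Nat.choose_self, Nat.sub_self, Nat.sub_self, one_smul,
        pow_zero, hU0]
      rfl
    · intro q hq hqp
      rw [key]
      rcases Prod.Lex.toLex_lt_toLex.mp (lt_of_le_of_ne (hmax q hq) (toLex.injective.ne hqp))
        with h | ⟨-, h⟩
      · simp [Nat.choose_eq_zero_of_lt h]
      · simp [h.not_ge]
  rw [ha, map_zero, map_zero] at hcoeff
  exact Finsupp.mem_support_iff.mp hp (Subtype.ext hcoeff.symm)

theorem mem_range_monomialSum_of_apply_eq_zero (hU0 : U 0 = 1) (hE0 : E 0 = 1)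
    (hEE : ∀ a b : ℕ, E a * E b = (a + b).choose a • E (a + b)) (hDE : ∀ d : ℕ, Commute D (E d))
    (hDT : Commute D T) (hET : ∀ d : ℕ, 1 ≤ d → E d * T - T * E d = E (d - 1))
    (hM₀ : ∀ v : M, D v = 0 → (∀ d : ℕ, 1 ≤ d → E d v = 0) → v ∈ M₀)
    (k : ℕ) {x : M} (hDx : D x = 0) (hEx : ∀ d : ℕ, k ≤ d → E d x = 0) :
    x ∈ (monomialSum T U M₀).range := by
  induction k generalizing x with
  | zero =>
    have hx : x = 0 := by simpa [hE0] using hEx 0 le_rfl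
    exact hx ▸ zero_mem _
  | succ j ih =>
    set z := E j x
    have hzD : D z = 0 := by
      rw [show D z = E j (D x) from DFunLike.congr_fun (hDE j).eq x, hDx, map_zero]
    have hzE (d : ℕ) (hd : 1 ≤ d) : E d z = 0 := by
      rw [show E d z = ((d + j).choose d • E (d + j)) x from DFunLike.congr_fun (hEE d j) x]
      simp [hEx (d + j) (by omega)]
    have hTz : (T ^ j) z ∈ (monomialSum T U M₀).range :=
      ⟨Finsupp.single (j, 0) ⟨z, hM₀ z hzD hzE⟩, by simp [monomialSum_single, hU0]⟩
    have hrest : x - (T ^ j) z ∈ (monomialSum T U M₀).range := by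
      refine ih ?_ fun d hd => ?_
      · rw [map_sub, hDx, show D ((T ^ j) z) = (T ^ j) (D z) from
          DFunLike.congr_fun (hDT.pow_right j).eq z, hzD, map_zero, sub_zero]
      · rw [map_sub, dividedDeriv_apply_pow_apply hE0 hET hzE]
        rcases hd.lt_or_eq with hlt | rfl
        · simp [hEx d hlt, Nat.choose_eq_zero_of_lt hlt]
        · simp [z]
    simpa using add_mem hrest hTz

theorem exists_apply_eq_of_mem_range_monomialSum (hDT : Commute D T)
    (hDU : ∀ d : ℕ, 1 ≤ d → D * U d - U d * D = U (d - 1)) (hM₀ : ∀ v ∈ M₀, D v = 0)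
    {y : M} (hy : y ∈ (monomialSum T U M₀).range) :
    ∃ z ∈ (monomialSum T U M₀).range, D z = y := by
  obtain ⟨a, rfl⟩ := hy
  induction a using Finsupp.induction_linear with
  | zero => exact ⟨0, zero_mem _, by simp⟩
  | add a b ha hb =>
    obtain ⟨z, hz, hDz⟩ := ha
    obtain ⟨w, hw, hDw⟩ := hb
    exact ⟨z + w, add_mem hz hw, by rw [map_add, map_add, hDz, hDw]⟩
  | single p v =>
    refine ⟨_, ⟨Finsupp.single (p.1, p.2 + 1) v, rfl⟩, ?_⟩
    rw [monomialSum_single, monomialSum_single, show D ((T ^ p.1) _) = (T ^ p.1) (D _) from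
      DFunLike.congr_fun (hDT.pow_right p.1).eq _, apply_apply_of_commutator_eq
      (hDU (p.2 + 1) p.2.succ_pos), hM₀ v v.2, map_zero, zero_add, Nat.add_sub_cancel]

theorem mem_range_monomialSum_of_pow_apply_eq_zero (hU0 : U 0 = 1) (hE0 : E 0 = 1)
    (hEE : ∀ a b : ℕ, E a * E b = (a + b).choose a • E (a + b)) (hDE : ∀ d : ℕ, Commute D (E d))
    (hDT : Commute D T) (hDU : ∀ d : ℕ, 1 ≤ d → D * U d - U d * D = U (d - 1))
    (hET : ∀ d : ℕ, 1 ≤ d → E d * T - T * E d = E (d - 1))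
    (hEnil : ∀ x : M, ∃ n : ℕ, ∀ d : ℕ, n ≤ d → E d x = 0)
    (hM₀ : ∀ v : M, v ∈ M₀ ↔ D v = 0 ∧ ∀ d : ℕ, 1 ≤ d → E d v = 0)
    (k : ℕ) {x : M} (hx : (D ^ k) x = 0) : x ∈ (monomialSum T U M₀).range := by
  induction k generalizing x with
  | zero => exact (show x = 0 from hx) ▸ zero_mem _
  | succ k ih =>
    obtain ⟨y, hy, hDy⟩ := exists_apply_eq_of_mem_range_monomialSum hDT hDU
      (fun v hv => ((hM₀ v).1 hv).1) (ih (x := D x) hx)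
    obtain ⟨n, hn⟩ := hEnil (x - y)
    have hxy : x - y ∈ (monomialSum T U M₀).range :=
      mem_range_monomialSum_of_apply_eq_zero hU0 hE0 hEE hDE hDT hET
        (fun v hv hv' => (hM₀ v).2 ⟨hv, hv'⟩) n (by rw [map_sub, hDy, sub_self]) hn
    simpa using add_mem hxy hy

end monomialSum

end

theorem stmt10_general (M : Type*) [AddCommGroup M] (T D : AddMonoid.End M)
    (U E : ℕ → AddMonoid.End M)
    (hU0 : U 0 = 1) (hE0 : E 0 = 1)
    (hEE : ∀ a b : ℕ, E a * E b = (a + b).choose a • E (a + b))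
    (hDE : ∀ d : ℕ, D * E d = E d * D)
    (hEU : ∀ d e : ℕ, E d * U e = U e * E d)
    (hDT : D * T = T * D)
    (hDU : ∀ d : ℕ, 1 ≤ d → D * U d - U d * D = U (d - 1))
    (hET : ∀ d : ℕ, 1 ≤ d → E d * T - T * E d = E (d - 1))
    (hnil : ∀ x : M, ∃ n : ℕ, (D ^ n) x = 0 ∧ ∀ d : ℕ, n ≤ d → (E d) x = 0)
    (M₀ : AddSubgroup M)
    (hM₀ : ∀ x : M, x ∈ M₀ ↔ (D x = 0 ∧ ∀ d : ℕ, 1 ≤ d → (E d) x = 0)) :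
    ∃ φ : ((ℕ × ℕ) →₀ M₀) ≃+ M,
      ∀ a : (ℕ × ℕ) →₀ M₀, φ a = a.sum fun p v => (T ^ p.1) ((U p.2) (v : M)) := by
  have hinj : Function.Injective (monomialSum T U M₀) :=
    monomialSum_injective hU0 hE0 hEU hDT hDU hET fun v hv => (hM₀ v).1 hv
  have hsurj : Function.Surjective (monomialSum T U M₀) := fun x =>
    have ⟨k, hk, _⟩ := hnil x
    mem_range_monomialSum_of_pow_apply_eq_zero hU0 hE0 hEE hDE hDT hDU hET
      (fun y => (hnil y).imp fun _ h => h.2) hM₀ k hk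
  exact ⟨AddEquiv.ofBijective _ ⟨hinj, hsurj⟩, monomialSum_apply⟩

/-- Proposition 3.8 (Heis-mod-prop)(i): for a module `M` over the divided-power ring
`ℤ[t, u^{[•]}, ∂_t^{[•]}, ∂_u]` (with `T, U_d, E_d, D` playing the roles of `t`, the
divided powers `u^{[d]}`, the divided powers `∂_t^{[d]}`, and `∂_u`) on which `D` and
the `E_d` are locally nilpotent, the map sending a finitely supported family
`(a_{m,n})` of elements of `M₀ = {x : D x = 0, E_d x = 0 for d ≥ 1}` to
`Σ T^m(U_n(a_{m,n}))` is an isomorphism of abelian groups `M₀[t,u^{[•]}] ≅ M`. -/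
theorem stmt10 (M : Type*) [AddCommGroup M] (T D : AddMonoid.End M)
    (U E : ℕ → AddMonoid.End M)
    (hU0 : U 0 = 1) (hE0 : E 0 = 1)
    (hUU : ∀ a b : ℕ, U a * U b = (a + b).choose a • U (a + b))
    (hEE : ∀ a b : ℕ, E a * E b = (a + b).choose a • E (a + b))
    (hTU : ∀ d : ℕ, T * U d = U d * T)
    (hDE : ∀ d : ℕ, D * E d = E d * D)
    (hEU : ∀ d e : ℕ, E d * U e = U e * E d)
    (hDT : D * T = T * D)
    (hDU : ∀ d : ℕ, 1 ≤ d → D * U d - U d * D = U (d - 1))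
    (hET : ∀ d : ℕ, 1 ≤ d → E d * T - T * E d = E (d - 1))
    (hnil : ∀ x : M, ∃ n : ℕ, (D ^ n) x = 0 ∧ ∀ d : ℕ, n ≤ d → (E d) x = 0)
    (M₀ : AddSubgroup M)
    (hM₀ : ∀ x : M, x ∈ M₀ ↔ (D x = 0 ∧ ∀ d : ℕ, 1 ≤ d → (E d) x = 0)) :
    ∃ φ : ((ℕ × ℕ) →₀ M₀) ≃+ M,
      ∀ a : (ℕ × ℕ) →₀ M₀, φ a = a.sum fun p v => (T ^ p.1) ((U p.2) (v : M)) :=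
  stmt10_general M T D U E hU0 hE0 hEE hDE hEU hDT hDU hET hnil M₀ hM₀
end

section
/- The endomorphism T : M → M is injective, and the endomorphism D : M → M is surjective. (Proposition 3.8 (Heis-mod-prop)(ii); this is the abstract form of Collino's theorem that i_{N*} is injective and i_N^* is surjective.) -/
/-- Proposition 3.8 (Heis-mod-prop)(ii): for a module `M` over the divided-power ring
`ℤ[t, u^{[•]}, ∂_t^{[•]}, ∂_u]` (with `T, U_d, E_d, D` playing the roles of `t`, the
divided powers `u^{[d]}`, the divided powers `∂_t^{[d]}`, and `∂_u`) on which `D` and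
the `E_d` are locally nilpotent, the operator `T` is injective and the operator `D`
is surjective.  (Abstract form of Collino's theorem.) -/
theorem stmt11 (M : Type*) [AddCommGroup M] (T D : AddMonoid.End M)
    (U E : ℕ → AddMonoid.End M)
    (hU0 : U 0 = 1) (hE0 : E 0 = 1)
    (hUU : ∀ a b : ℕ, U a * U b = (a + b).choose a • U (a + b))
    (hEE : ∀ a b : ℕ, E a * E b = (a + b).choose a • E (a + b))
    (hTU : ∀ d : ℕ, T * U d = U d * T)
    (hDE : ∀ d : ℕ, D * E d = E d * D)
    (hEU : ∀ d e : ℕ, E d * U e = U e * E d)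
    (hDT : D * T = T * D)
    (hDU : ∀ d : ℕ, 1 ≤ d → D * U d - U d * D = U (d - 1))
    (hET : ∀ d : ℕ, 1 ≤ d → E d * T - T * E d = E (d - 1))
    (hnil : ∀ x : M, ∃ n : ℕ, (D ^ n) x = 0 ∧ ∀ d : ℕ, n ≤ d → (E d) x = 0) :
    Function.Injective ⇑T ∧ Function.Surjective ⇑D := by
  constructor
  · -- Injectivity of T
    intro x y hxy
    set z := x - y with hz
    have hTz : T z = 0 := by simp [hz, map_sub, hxy]
    obtain ⟨n, _, hEn⟩ := hnil z
    have key : ∀ k d : ℕ, n ≤ d + k → E d z = 0 := by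
      intro k
      induction k with
      | zero => intro d hd; exact hEn d (by omega)
      | succ k ih =>
        intro d hd
        by_cases h : n ≤ d + k
        · exact ih d h
        · have h1 : E (d + 1) * T - T * E (d + 1) = E d := by
            have := hET (d + 1) (by omega)
            simpa using this
          have h3 : E (d + 1) z = 0 := ih (d + 1) (by omega)
          have h2 : E d z = (E (d + 1)) (T z) - T ((E (d + 1)) z) := by
            rw [← h1]; rfl
          rw [hTz, h3, map_zero, map_zero, sub_zero] at h2
          exact h2
    have hz0 : z = 0 := by
      have := key n 0 (by omega)
      rwa [hE0] at this
    exact sub_eq_zero.mp hz0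
  · -- Surjectivity of D
    intro y
    obtain ⟨n, hDn, _⟩ := hnil y
    set f : ℕ → M := fun d => (-1 : ℤ) ^ d • (U d) ((D ^ d) y) with hf
    refine ⟨∑ d ∈ Finset.range n, (-1 : ℤ) ^ d • (U (d + 1)) ((D ^ d) y), ?_⟩
    have step : ∀ d : ℕ,
        D ((-1 : ℤ) ^ d • (U (d + 1)) ((D ^ d) y)) = f d - f (d + 1) := by
      intro d
      have h1 : D * U (d + 1) - U (d + 1) * D = U d := by
        have := hDU (d + 1) (by omega)
        simpa using this
      have h2 : D ((U (d + 1)) ((D ^ d) y)) - (U (d + 1)) (D ((D ^ d) y))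
          = (U d) ((D ^ d) y) := by
        rw [← h1]; rfl
      have hpow : D ((D ^ d) y) = (D ^ (d + 1)) y := by
        rw [pow_succ']; rfl
      have h3 : D ((U (d + 1)) ((D ^ d) y))
          = (U d) ((D ^ d) y) + (U (d + 1)) ((D ^ (d + 1)) y) := by
        rw [← hpow]
        exact sub_eq_iff_eq_add.mp h2
      rw [map_zsmul, h3, smul_add, hf]
      have hneg : (-1 : ℤ) ^ (d + 1) = -(-1 : ℤ) ^ d := by ring
      simp only [hneg, neg_smul, sub_neg_eq_add]
    have hsum : D (∑ d ∈ Finset.range n, (-1 : ℤ) ^ d • (U (d + 1)) ((D ^ d) y))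
        = ∑ d ∈ Finset.range n, (f d - f (d + 1)) := by
      rw [map_sum]
      exact Finset.sum_congr rfl fun d _ => step d
    rw [hsum, Finset.sum_range_sub' f n, hf]
    simp [hDn, hU0]
end

section
/- If N ⊆ Γ[t,u^{[•]}] is a subgroup stable under T, under D, under all U_d and under all E_d, then there exists a subgroup Γ' ⊆ Γ such that N consists exactly of the functions f : ℕ×ℕ → Γ (finitely supported) with f(m,n) ∈ Γ' for all (m,n). (The submodule lemma used in the proof of Proposition 3.8 (Heis-mod-prop)(i).) -/
/-- On `Γ[t,u^{[•]}]` (finitely supported functions `ℕ×ℕ → Γ`, with `γ t^m u^{[n]}`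
the function supported at `(m,n)` with value `γ`): `T(γ t^m u^{[n]}) = γ t^{m+1} u^{[n]}`. -/
noncomputable def Tmap {Γ : Type*} [AddCommGroup Γ] (f : (ℕ × ℕ) →₀ Γ) : (ℕ × ℕ) →₀ Γ :=
  f.sum fun p γ => Finsupp.single (p.1 + 1, p.2) γ

/-- `U_d(γ t^m u^{[n]}) = C(n+d,d)·γ t^m u^{[n+d]}`. -/
noncomputable def Umap {Γ : Type*} [AddCommGroup Γ] (d : ℕ) (f : (ℕ × ℕ) →₀ Γ) : (ℕ × ℕ) →₀ Γ :=
  f.sum fun p γ => Finsupp.single (p.1, p.2 + d) ((p.2 + d).choose d • γ)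

/-- `E_d(γ t^m u^{[n]}) = C(m,d)·γ t^{m−d} u^{[n]}` (zero when `d > m`, since then
`C(m,d) = 0`). -/
noncomputable def Emap {Γ : Type*} [AddCommGroup Γ] (d : ℕ) (f : (ℕ × ℕ) →₀ Γ) : (ℕ × ℕ) →₀ Γ :=
  f.sum fun p γ => Finsupp.single (p.1 - d, p.2) (p.1.choose d • γ)

/-- `D(γ t^m u^{[n]}) = γ t^m u^{[n−1]}` (zero when `n = 0`). -/
noncomputable def Dmap {Γ : Type*} [AddCommGroup Γ] (f : (ℕ × ℕ) →₀ Γ) : (ℕ × ℕ) →₀ Γ :=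
  f.sum fun p γ => if 1 ≤ p.2 then Finsupp.single (p.1, p.2 - 1) γ else 0

/-!
Let `Γ'` be the set of `γ` with `γ t^0 u^{[0]} ∈ N`. Monomials can be moved freely inside `N`:
`U_n T^m` sends `γ t^0 u^{[0]}` to `γ t^m u^{[n]}` and `D^n E_m` sends it back. So it suffices to
show that `N` contains every monomial `f(m,n) t^m u^{[n]}` of each of its elements `f`.

If all `t`-degrees occurring in `f` are at most `K`, then `T^K E_K f` is exactly the `t`-degree `K`
part of `f`, since `C(m,K)` vanishes for `m < K` and equals `1` for `m = K`. Subtracting it lowers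
the top degree, so by induction `N` contains every `t`-homogeneous component of `f`. In the same
way `U_K D^K` extracts the top `u`-degree part, and a monomial is a component for both gradings.
-/

open Finsupp

theorem Finsupp.filter_level_mem_of_top {α M : Type*} [AddCommGroup M] (level : α → ℕ)
    {N : AddSubgroup (α →₀ M)}
    (htop : ∀ K, ∀ f ∈ N, (∀ p ∈ f.support, level p ≤ K) → f.filter (level · = K) ∈ N)
    {f : α →₀ M} (hf : f ∈ N) (k : ℕ) : f.filter (level · = k) ∈ N := by
  obtain ⟨K, hK⟩ : ∃ K, ∀ p ∈ f.support, level p < K :=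
    ⟨f.support.sup level + 1, fun p hp => Nat.lt_succ_of_le (Finset.le_sup hp)⟩
  induction K generalizing f with
  | zero => simp_all
  | succ K ih =>
    have htopK := htop K f hf fun p hp => Nat.le_of_lt_succ (hK p hp)
    by_cases hk : k = K
    · exact hk ▸ htopK
    set g := f - f.filter (level · = K)
    have hg : ∀ p ∈ g.support, level p < K := by
      intro p hp
      by_cases hpK : level p = K
      · simp [g, hpK] at hp
      · have hfp : f p ≠ 0 := by simpa [g, hpK] using hp
        have := hK p (mem_support_iff.2 hfp)
        omega
    have hfg : f.filter (level · = k) = g.filter (level · = k) := by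
      ext p
      by_cases hp : level p = k <;> simp [g, hp, hk]
    exact hfg ▸ ih (N.sub_mem hf htopK) hg

theorem Finsupp.addMonoidHom_eq_filter_of_single {α M : Type*} [AddCommMonoid M] (level : α → ℕ)
    (K : ℕ) (H : (α →₀ M) →+ (α →₀ M))
    (hH : ∀ p γ, level p ≤ K → H (single p γ) = (single p γ).filter (level · = K))
    {f : α →₀ M} (hf : ∀ p ∈ f.support, level p ≤ K) : H f = f.filter (level · = K) := by
  change H f = filterAddHom (level · = K) f
  rw [← f.sum_single, map_finsuppSum, map_finsuppSum]
  exact sum_congr fun p hp => hH p _ (hf p hp)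

section Operators

variable {Γ : Type*} [AddCommGroup Γ]

noncomputable def tmapHom : AddMonoid.End ((ℕ × ℕ) →₀ Γ) where
  toFun := Tmap
  map_zero' := sum_zero_index
  map_add' _ _ := sum_add_index' (by simp) (by simp [single_add])

noncomputable def umapHom (d : ℕ) : AddMonoid.End ((ℕ × ℕ) →₀ Γ) where
  toFun := Umap d
  map_zero' := sum_zero_index
  map_add' _ _ := sum_add_index' (by simp) (by simp [smul_add, single_add])

noncomputable def emapHom (d : ℕ) : AddMonoid.End ((ℕ × ℕ) →₀ Γ) where
  toFun := Emap d
  map_zero' := sum_zero_index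
  map_add' _ _ := sum_add_index' (by simp) (by simp [smul_add, single_add])

noncomputable def dmapHom : AddMonoid.End ((ℕ × ℕ) →₀ Γ) where
  toFun := Dmap
  map_zero' := sum_zero_index
  map_add' _ _ := sum_add_index' (by intro; split_ifs <;> simp)
    (by intro _ _ _; split_ifs <;> simp [single_add])

lemma Tmap_single (m n : ℕ) (γ : Γ) : Tmap (single (m, n) γ) = single (m + 1, n) γ :=
  sum_single_index (by simp)

lemma Umap_single (d m n : ℕ) (γ : Γ) :
    Umap d (single (m, n) γ) = single (m, n + d) ((n + d).choose d • γ) :=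
  sum_single_index (by simp)

lemma Emap_single (d m n : ℕ) (γ : Γ) :
    Emap d (single (m, n) γ) = single (m - d, n) (m.choose d • γ) :=
  sum_single_index (by simp)

lemma Dmap_single (m n : ℕ) (γ : Γ) :
    Dmap (single (m, n) γ) = if 1 ≤ n then single (m, n - 1) γ else 0 :=
  sum_single_index (by split_ifs <;> simp)

lemma Tmap_iterate_single (k m n : ℕ) (γ : Γ) :
    Tmap^[k] (single (m, n) γ) = single (m + k, n) γ := by
  induction k with
  | zero => rfl
  | succ k ih => rw [Function.iterate_succ_apply', ih, Tmap_single, add_assoc]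

lemma Dmap_iterate_single (k m n : ℕ) (γ : Γ) :
    Dmap^[k] (single (m, n) γ) = if k ≤ n then single (m, n - k) γ else 0 := by
  induction k with
  | zero => rfl
  | succ k ih =>
    rw [Function.iterate_succ_apply', ih]
    by_cases hk : k + 1 ≤ n
    · rw [if_pos (by omega), if_pos hk, Dmap_single, if_pos (by omega), Nat.sub_sub]
    · rw [if_neg hk]
      split_ifs
      · rw [Dmap_single, if_neg (by omega)]
      · exact map_zero dmapHom

lemma Tmap_iterate_Emap_single {K m : ℕ} (hm : m ≤ K) (n : ℕ) (γ : Γ) :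
    Tmap^[K] (Emap K (single (m, n) γ)) = (single (m, n) γ).filter (·.1 = K) := by
  rw [Emap_single]
  rcases hm.lt_or_eq with hm | rfl
  · rw [Nat.choose_eq_zero_of_lt hm, zero_smul, single_zero,
      filter_single_of_neg (p := fun x : ℕ × ℕ => x.1 = K) hm.ne]
    exact map_zero (tmapHom ^ K)
  · rw [Nat.choose_self, one_smul, Nat.sub_self, Tmap_iterate_single, zero_add,
      filter_single_of_pos (p := fun x : ℕ × ℕ => x.1 = m) rfl]

lemma Umap_Dmap_iterate_single (m : ℕ) {K n : ℕ} (hn : n ≤ K) (γ : Γ) :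
    Umap K (Dmap^[K] (single (m, n) γ)) = (single (m, n) γ).filter (·.2 = K) := by
  rw [Dmap_iterate_single]
  rcases hn.lt_or_eq with hn | rfl
  · rw [if_neg (by omega), filter_single_of_neg (p := fun x : ℕ × ℕ => x.2 = K) hn.ne]
    exact map_zero (umapHom K)
  · rw [if_pos le_rfl, Nat.sub_self, Umap_single, zero_add, Nat.choose_self, one_smul,
      filter_single_of_pos (p := fun x : ℕ × ℕ => x.2 = n) rfl]

variable {N : AddSubgroup ((ℕ × ℕ) →₀ Γ)}

lemma filter_fst_mem (hT : ∀ f ∈ N, Tmap f ∈ N) (hE : ∀ d : ℕ, ∀ f ∈ N, Emap d f ∈ N)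
    {f : (ℕ × ℕ) →₀ Γ} (hf : f ∈ N) (m : ℕ) : f.filter (·.1 = m) ∈ N := by
  refine filter_level_mem_of_top Prod.fst (fun K g hg hsupp => ?_) hf m
  rw [← addMonoidHom_eq_filter_of_single Prod.fst K ((tmapHom ^ K).comp (emapHom K))
    (fun ⟨_, n⟩ γ hm => Tmap_iterate_Emap_single hm n γ) hsupp]
  exact Set.MapsTo.iterate (fun f hf => hT f hf) K (hE K g hg)

lemma filter_snd_mem (hD : ∀ f ∈ N, Dmap f ∈ N) (hU : ∀ d : ℕ, ∀ f ∈ N, Umap d f ∈ N)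
    {f : (ℕ × ℕ) →₀ Γ} (hf : f ∈ N) (n : ℕ) : f.filter (·.2 = n) ∈ N := by
  refine filter_level_mem_of_top Prod.snd (fun K g hg hsupp => ?_) hf n
  rw [← addMonoidHom_eq_filter_of_single Prod.snd K ((umapHom K).comp (dmapHom ^ K))
    (fun ⟨m, _⟩ γ hn => Umap_Dmap_iterate_single m hn γ) hsupp]
  exact hU K _ (Set.MapsTo.iterate (fun f hf => hD f hf) K hg)

lemma single_apply_mem (hT : ∀ f ∈ N, Tmap f ∈ N) (hD : ∀ f ∈ N, Dmap f ∈ N)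
    (hU : ∀ d : ℕ, ∀ f ∈ N, Umap d f ∈ N) (hE : ∀ d : ℕ, ∀ f ∈ N, Emap d f ∈ N)
    {f : (ℕ × ℕ) →₀ Γ} (hf : f ∈ N) (p : ℕ × ℕ) : single p (f p) ∈ N := by
  have hp : single p (f p) = (f.filter (·.1 = p.1)).filter (·.2 = p.2) := by
    obtain ⟨m, n⟩ := p
    ext ⟨a, b⟩
    by_cases ha : a = m <;> by_cases hb : b = n <;> simp [ha, hb]
  rw [hp]
  exact filter_snd_mem hD hU (filter_fst_mem hT hE hf p.1) p.2

lemma single_zero_mem_of_single_mem (hD : ∀ f ∈ N, Dmap f ∈ N)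
    (hE : ∀ d : ℕ, ∀ f ∈ N, Emap d f ∈ N) {m n : ℕ} {γ : Γ} (h : single (m, n) γ ∈ N) :
    single (0, 0) γ ∈ N := by
  have hshift : Dmap^[n] (Emap m (single (m, n) γ)) = single (0, 0) γ := by
    rw [Emap_single, Nat.choose_self, one_smul, Nat.sub_self, Dmap_iterate_single,
      if_pos le_rfl, Nat.sub_self]
  exact hshift ▸ Set.MapsTo.iterate (fun f hf => hD f hf) n (hE m _ h)

lemma single_mem_of_single_zero_mem (hT : ∀ f ∈ N, Tmap f ∈ N)
    (hU : ∀ d : ℕ, ∀ f ∈ N, Umap d f ∈ N) (m n : ℕ) {γ : Γ} (h : single (0, 0) γ ∈ N) :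
    single (m, n) γ ∈ N := by
  have hshift : Umap n (Tmap^[m] (single (0, 0) γ)) = single (m, n) γ := by
    rw [Tmap_iterate_single, Umap_single, zero_add, zero_add, Nat.choose_self, one_smul]
  exact hshift ▸ hU n _ (Set.MapsTo.iterate (fun f hf => hT f hf) m h)

end Operators

/-- The submodule lemma used in the proof of Proposition 3.8 (Heis-mod-prop)(i):
a subgroup of `Γ[t,u^{[•]}]` stable under `T`, `D`, all `U_d` and all `E_d` has the
form `Γ'[t,u^{[•]}]` for a subgroup `Γ' ⊆ Γ`. -/
theorem stmt12 {Γ : Type*} [AddCommGroup Γ] (N : AddSubgroup ((ℕ × ℕ) →₀ Γ))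
    (hT : ∀ f ∈ N, Tmap f ∈ N) (hD : ∀ f ∈ N, Dmap f ∈ N)
    (hU : ∀ d : ℕ, ∀ f ∈ N, Umap d f ∈ N) (hE : ∀ d : ℕ, ∀ f ∈ N, Emap d f ∈ N) :
    ∃ Γ' : AddSubgroup Γ, ∀ f : (ℕ × ℕ) →₀ Γ, f ∈ N ↔ ∀ p : ℕ × ℕ, f p ∈ Γ' := by
  refine ⟨N.comap (singleAddHom (0, 0)), fun f => ⟨fun hf p => ?_, fun hf => ?_⟩⟩
  · exact single_zero_mem_of_single_mem hD hE (single_apply_mem hT hD hU hE hf p)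
  · rw [← f.sum_single]
    exact sum_mem fun p _ => single_mem_of_single_zero_mem hT hU p.1 p.2 (hf p)
end

section
/- Let K be a field of characteristic zero and V a finite-dimensional K-vector space. Let e, f, h and e', f', h' be linear endomorphisms of V satisfying the sl₂-triple relations h∘e − e∘h = 2e, h∘f − f∘h = −2f, e∘f − f∘e = h, and likewise h'∘e' − e'∘h' = 2e', h'∘f' − f'∘h' = −2f', e'∘f' − f'∘e' = h'. If e = e' and h∘h' = h'∘h, then h = h' and f = f'. (The uniqueness of sl₂-triples used in the proof of Theorem 4.4 (Lefschetz-thm)(ii).) -/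
/-!
Let `z = h - h'`. It commutes with `h` and is killed by `ad e`, so it is a primitive vector of
weight `0` for both triples; in the finite-dimensional adjoint representation this forces
`⁅f, z⁆ = ⁅f', z⁆ = 0`. Hence `g = f - f'` has `ad h`-weight `-2` and `⁅f, ⁅e, g⁆⁆ = ⁅f, z⁆ = 0`.
Running the usual `f`-string argument from `g`, which only needs `⁅f, ⁅e, g⁆⁆ = 0` instead of
`⁅e, g⁆ = 0`, shows that a nonzero such `g` would have a natural-number weight, so `g = 0`, and
then `z = ⁅e, g⁆ = 0`.
-/

open LieModule

lemma eq_zero_and_eq_zero_of_lie_zero_eq {L : Type*} [LieRing L] [IsAddTorsionFree L] {h f : L}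
    (hf : ⁅(0 : L), f⁆ = h) (hhf : ⁅h, f⁆ = -(2 • f)) : h = 0 ∧ f = 0 := by
  rw [zero_lie] at hf
  subst hf
  exact ⟨rfl, nsmul_right_injective two_ne_zero (by simpa using hhf.symm)⟩

namespace IsSl2Triple

lemma of_e_ne_zero {L : Type*} [LieRing L] [IsAddTorsionFree L] {h e f : L} (he : e ≠ 0)
    (hef : ⁅e, f⁆ = h) (hhe : ⁅h, e⁆ = 2 • e) (hhf : ⁅h, f⁆ = -(2 • f)) : IsSl2Triple h e f where
  h_ne_zero := by
    rintro rfl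
    exact he (nsmul_right_injective two_ne_zero (by simpa using hhe.symm))
  lie_e_f := hef
  lie_h_e_nsmul := hhe
  lie_h_f_nsmul := hhf

section Module

variable {R L M : Type*} [CommRing R] [LieRing L] [LieAlgebra R L]
  [AddCommGroup M] [Module R M] [LieRingModule L M] [LieModule R L M]
  {h e f : L} {m : M} {μ : R}

local notation "ψ " n => ((toEnd R L M f) ^ n) m

lemma lie_h_pow_toEnd_f_of_lie_h (t : IsSl2Triple h e f) (hm : ⁅h, m⁆ = μ • m) (n : ℕ) :
    ⁅h, ψ n⁆ = (μ - 2 * n) • ψ n := by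
  induction n with
  | zero => simpa using hm
  | succ n ih =>
    rw [pow_succ', Module.End.mul_apply, toEnd_apply_apply, Nat.cast_add, Nat.cast_one,
      leibniz_lie h, t.lie_lie_smul_f R, ← neg_smul, ih, lie_smul, smul_lie, ← add_smul]
    congr 1
    ring

lemma lie_e_pow_succ_toEnd_f_of_lie_f_lie_e (t : IsSl2Triple h e f) (hm : ⁅h, m⁆ = μ • m)
    (hfe : ⁅f, ⁅e, m⁆⁆ = 0) (n : ℕ) :
    ⁅e, ψ (n + 1)⁆ = ((n + 1) * (μ - n)) • ψ n := by
  induction n with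
  | zero =>
    simp only [zero_add, pow_one, toEnd_apply_apply, Nat.cast_zero, sub_zero, one_mul,
      pow_zero, Module.End.one_apply, leibniz_lie e, t.lie_e_f, hfe, hm, add_zero]
  | succ n ih =>
    rw [pow_succ', Module.End.mul_apply, toEnd_apply_apply, leibniz_lie e, t.lie_e_f,
      t.lie_h_pow_toEnd_f_of_lie_h hm, ih, lie_smul, ← toEnd_apply_apply (R := R),
      ← Module.End.mul_apply, ← pow_succ', ← add_smul, Nat.cast_add, Nat.cast_one]
    congr 1
    ring

variable [IsDomain R] [CharZero R] [IsNoetherian R M] [Module.IsTorsionFree R M]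

lemma exists_nat_of_lie_f_lie_e (t : IsSl2Triple h e f) (hm₀ : m ≠ 0) (hm : ⁅h, m⁆ = μ • m)
    (hfe : ⁅f, ⁅e, m⁆⁆ = 0) : ∃ n : ℕ, μ = n := by
  suffices ∃ n : ℕ, (ψ n) = 0 by
    obtain ⟨n, hn₁, hn₂⟩ := Nat.exists_not_and_succ_of_not_zero_of_exists (by simpa) this
    refine ⟨n, ?_⟩
    have := t.lie_e_pow_succ_toEnd_f_of_lie_f_lie_e hm hfe n
    rw [hn₂, lie_zero, eq_comm, smul_eq_zero_iff_left hn₁, mul_eq_zero, sub_eq_zero] at this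
    exact this.resolve_left <| Nat.cast_add_one_ne_zero n
  have hs : (Set.range fun n : ℕ ↦ μ - 2 * n).Infinite := by
    rw [Set.infinite_range_iff (fun n m ↦ by simp)]; infer_instance
  by_contra! contra
  exact hs ((toEnd R L M h).eigenvectors_linearIndependent
    {μ - 2 * n | n : ℕ}
    (fun ⟨s, hs⟩ ↦ ψ Classical.choose hs)
    (fun ⟨r, hr⟩ ↦ by simp [t.lie_h_pow_toEnd_f_of_lie_h hm, Classical.choose_spec hr, contra,
      Module.End.hasEigenvector_iff])).finite

end Module

lemma lie_f_eq_zero_of_lie_h_eq_zero_of_lie_e_eq_zero (R : Type*) {L M : Type*} [CommRing R]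
    [IsDomain R] [CharZero R] [LieRing L] [LieAlgebra R L] [AddCommGroup M] [Module R M]
    [LieRingModule L M] [LieModule R L M] [IsNoetherian R M] [Module.IsTorsionFree R M]
    {h e f : L} {m : M} (t : IsSl2Triple h e f) (hh : ⁅h, m⁆ = 0) (he : ⁅e, m⁆ = 0) :
    ⁅f, m⁆ = 0 := by
  rcases eq_or_ne m 0 with rfl | hm₀
  · exact lie_zero f
  · have P : t.HasPrimitiveVectorWith m (0 : R) := ⟨hm₀, by rw [hh, zero_smul], he⟩
    simpa using P.pow_toEnd_f_eq_zero_of_eq_nat (n := 0) Nat.cast_zero.symm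

lemma h_eq_and_f_eq_of_lie_eq_zero (R : Type*) {L : Type*} [CommRing R] [IsDomain R] [CharZero R]
    [LieRing L] [LieAlgebra R L] [IsNoetherian R L] [Module.IsTorsionFree R L]
    {h e f h' f' : L} (t : IsSl2Triple h e f) (t' : IsSl2Triple h' e f') (hh : ⁅h, h'⁆ = 0) :
    h = h' ∧ f = f' := by
  have hez : ⁅e, h - h'⁆ = 0 := by
    rw [lie_sub, ← lie_skew e h, ← lie_skew e h', t.lie_h_e_nsmul, t'.lie_h_e_nsmul, sub_self]
  have hfz : ⁅f, h - h'⁆ = 0 := lie_f_eq_zero_of_lie_h_eq_zero_of_lie_e_eq_zero R t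
    (by rw [lie_sub, lie_self, hh, sub_zero]) hez
  have hfz' : ⁅f', h - h'⁆ = 0 := lie_f_eq_zero_of_lie_h_eq_zero_of_lie_e_eq_zero R t'
    (by rw [lie_sub, ← lie_skew, hh, neg_zero, lie_self, sub_zero]) hez
  have hhf' : ⁅h, f'⁆ = ⁅h', f'⁆ := by
    rw [← sub_eq_zero, ← sub_lie, ← lie_skew, hfz', neg_zero]
  have hef : ⁅e, f - f'⁆ = h - h' := by rw [lie_sub, t.lie_e_f, t'.lie_e_f]
  have hhf : ⁅h, f - f'⁆ = (-2 : R) • (f - f') := by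
    rw [lie_sub, hhf', t.lie_lie_smul_f R, t'.lie_lie_smul_f R]
    module
  have hf : f - f' = 0 := by
    by_contra hf
    obtain ⟨n, hn⟩ := t.exists_nat_of_lie_f_lie_e hf hhf (by rw [hef, hfz])
    exact Nat.cast_add_one_ne_zero (R := R) (n + 1) (by push_cast; linear_combination -hn)
  rw [hf, lie_zero, eq_comm, sub_eq_zero] at hef
  exact ⟨hef, sub_eq_zero.mp hf⟩

end IsSl2Triple

-- Under the commutator bracket the ring identities `h1`, `h2`, `h3`, … are the bracket
-- relations of `IsSl2Triple` by `rfl`.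
attribute [local instance 100] LieRing.ofAssociativeRing

/-- Uniqueness of sl₂-triples (used in the proof of Theorem 4.4 (Lefschetz-thm)(ii)):
two sl₂-triples `(e,f,h)` and `(e',f',h')` on a finite-dimensional vector space over a
field of characteristic zero with `e = e'` and `[h,h'] = 0` coincide. -/
theorem stmt13 (K V : Type*) [Field K] [CharZero K] [AddCommGroup V] [Module K V]
    [FiniteDimensional K V] (e f h e' f' h' : Module.End K V)
    (h1 : h * e - e * h = 2 • e) (h2 : h * f - f * h = -(2 • f)) (h3 : e * f - f * e = h)
    (h1' : h' * e' - e' * h' = 2 • e') (h2' : h' * f' - f' * h' = -(2 • f'))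
    (h3' : e' * f' - f' * e' = h')
    (hee : e = e') (hhh : h * h' = h' * h) :
    h = h' ∧ f = f' := by
  subst hee
  have := IsAddTorsionFree.of_isTorsionFree K (Module.End K V)
  rcases eq_or_ne e 0 with rfl | he
  · obtain ⟨rfl, rfl⟩ := eq_zero_and_eq_zero_of_lie_zero_eq h3 h2
    obtain ⟨rfl, rfl⟩ := eq_zero_and_eq_zero_of_lie_zero_eq h3' h2'
    exact ⟨rfl, rfl⟩
  · exact IsSl2Triple.h_eq_and_f_eq_of_lie_eq_zero K (.of_e_ne_zero he h3 h1 h2)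
      (.of_e_ne_zero he h3' h1' h2') (sub_eq_zero.mpr hhh)
end

section
/- Let A be a commutative ring and S ⊆ A a subset that generates A as a ring. Let m, m' ≥ 1 be integers and let δ, δ', δ'' : A → A be ℤ-linear derivations (additive maps satisfying the Leibniz rule δ(xy) = δ(x)y + xδ(y)) such that δ(x) = x^m, δ'(x) = x^{m'} and δ''(x) = x^{m+m'−1} for every x ∈ S. Then δ ∘ δ' − δ' ∘ δ = (m'−m)·δ''. (The commutation relations [δ_m, δ_{m'}] = (m'−m)δ_{m+m'−1} of Theorem 0.3 (curve-thm)(ii), giving an action of the Lie algebra of vector fields on the line vanishing at the origin.) -/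
section Aux

variable {A : Type*} [CommRing A]

lemma der_zero (f : A → A) (hadd : ∀ x y, f (x + y) = f x + f y) : f 0 = 0 := by
  simpa using hadd 0 0

lemma der_neg (f : A → A) (hadd : ∀ x y, f (x + y) = f x + f y) (x : A) :
    f (-x) = - f x := by
  have h0 := der_zero f hadd
  have := hadd x (-x)
  rw [add_neg_cancel, h0] at this
  linear_combination -this

lemma der_one (f : A → A) (hleib : ∀ x y, f (x * y) = f x * y + x * f y) : f 1 = 0 := by
  simpa using hleib 1 1

lemma der_pow (f : A → A) (hleib : ∀ x y, f (x * y) = f x * y + x * f y) (x : A) :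
    ∀ n : ℕ, 1 ≤ n → f (x ^ n) = (n : ℤ) • (x ^ (n - 1) * f x) := by
  intro n
  induction n with
  | zero => omega
  | succ k ih =>
    intro _
    rcases Nat.eq_zero_or_pos k with hk | hk
    · subst hk; simp
    · have h := hleib x (x ^ k)
      rw [ih hk] at h
      rw [pow_succ, mul_comm (x ^ k) x, h]
      have hx2 : x * x ^ (k - 1) = x ^ k := by
        rw [← pow_succ']; congr 1; omega
      simp only [zsmul_eq_mul, Nat.add_sub_cancel]
      push_cast
      linear_combination (k : A) * f x * hx2

end Aux

/-- The commutation relations `[δ_m, δ_{m'}] = (m'−m)·δ_{m+m'−1}` of Theorem 0.3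
(curve-thm)(ii): if `δ, δ', δ''` are derivations of a commutative ring `A` taking the
values `x^m`, `x^{m'}`, `x^{m+m'−1}` on a generating set `S`, then
`δ∘δ' − δ'∘δ = (m'−m)·δ''`. -/
theorem stmt17 (A : Type*) [CommRing A] (S : Set A) (hgen : Subring.closure S = ⊤)
    (m m' : ℕ) (hm : 1 ≤ m) (hm' : 1 ≤ m') (δ δ' δ'' : A → A)
    (hadd : ∀ x y, δ (x + y) = δ x + δ y)
    (hleib : ∀ x y, δ (x * y) = δ x * y + x * δ y)
    (hadd' : ∀ x y, δ' (x + y) = δ' x + δ' y)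
    (hleib' : ∀ x y, δ' (x * y) = δ' x * y + x * δ' y)
    (hadd'' : ∀ x y, δ'' (x + y) = δ'' x + δ'' y)
    (hleib'' : ∀ x y, δ'' (x * y) = δ'' x * y + x * δ'' y)
    (hS : ∀ x ∈ S, δ x = x ^ m)
    (hS' : ∀ x ∈ S, δ' x = x ^ m')
    (hS'' : ∀ x ∈ S, δ'' x = x ^ (m + m' - 1)) :
    ∀ x : A, δ (δ' x) - δ' (δ x) = ((m' : ℤ) - (m : ℤ)) • δ'' x := by
  have hz : δ 0 = 0 := der_zero δ hadd
  have hz' : δ' 0 = 0 := der_zero δ' hadd'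
  have hz'' : δ'' 0 = 0 := der_zero δ'' hadd''
  have ho : δ 1 = 0 := der_one δ hleib
  have ho' : δ' 1 = 0 := der_one δ' hleib'
  have ho'' : δ'' 1 = 0 := der_one δ'' hleib''
  set T : Subring A :=
    { carrier := {x | δ (δ' x) - δ' (δ x) = ((m' : ℤ) - (m : ℤ)) • δ'' x}
      zero_mem' := by simp [hz, hz', hz'']
      one_mem' := by simp [hz, hz', ho, ho', ho'']
      add_mem' := by
        intro a b ha hb
        simp only [Set.mem_setOf_eq] at *
        rw [hadd', hadd, hadd, hadd', hadd'']
        rw [smul_add]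
        have : δ (δ' a) + δ (δ' b) - (δ' (δ a) + δ' (δ b))
            = (δ (δ' a) - δ' (δ a)) + (δ (δ' b) - δ' (δ b)) := by ring
        rw [this, ha, hb]
      neg_mem' := by
        intro a ha
        simp only [Set.mem_setOf_eq] at *
        rw [der_neg δ' hadd', der_neg δ hadd, der_neg δ hadd, der_neg δ' hadd',
          der_neg δ'' hadd'', smul_neg]
        rw [← ha]; ring
      mul_mem' := by
        intro a b ha hb
        simp only [Set.mem_setOf_eq] at *
        rw [hleib', hleib, hadd, hleib, hleib, hadd', hleib', hleib', hleib'']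
        have : δ (δ' a) * b + δ' a * δ b + (δ a * δ' b + a * δ (δ' b))
            - (δ' (δ a) * b + δ a * δ' b + (δ' a * δ b + a * δ' (δ b)))
            = (δ (δ' a) - δ' (δ a)) * b + a * (δ (δ' b) - δ' (δ b)) := by ring
        rw [this, ha, hb, smul_add, smul_mul_assoc, mul_smul_comm] }
  have hT : ∀ x : A, x ∈ T := by
    have : Subring.closure S ≤ T := Subring.closure_le.mpr (by
      intro x hx
      show δ (δ' x) - δ' (δ x) = ((m' : ℤ) - (m : ℤ)) • δ'' x
      rw [hS x hx, hS' x hx,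
        der_pow δ hleib x m' hm', der_pow δ' hleib' x m hm,
        hS x hx, hS' x hx, hS'' x hx]
      have h1 : x ^ (m' - 1) * x ^ m = x ^ (m + m' - 1) := by
        rw [← pow_add]; congr 1; omega
      have h2 : x ^ (m - 1) * x ^ m' = x ^ (m + m' - 1) := by
        rw [← pow_add]; congr 1; omega
      rw [h1, h2, sub_smul])
    intro x
    exact this (hgen ▸ Subring.mem_top x)
  intro x
  exact hT x
end

section
/- In the polynomial ring ℚ[ψ, t, u] in three variables over ℚ, let e be the ℚ-linear endomorphism given by e(f) = t·(∂f/∂u − ψ·∂f/∂t). For natural numbers j, m let S(j,m) be the Stirling number of the second kind, determined by m!·S(j,m) = Σ_{l=0}^{m} (−1)^l C(m,l)(m−l)^j. Then for all natural numbers j ≤ N: e^j(u^N) = Σ_{m=0}^{j} (−ψ)^{j−m} · S(j,m) · (N!/(N−m)!) · t^m · u^{N−m}. (The computation of P_{1,1}([p₀])^j([C^{[N]}]) in the proof of Proposition 5.4 (pull-back-prop).) -/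
private def T : ℕ → ℕ → ℕ
  | 0, 0 => 1
  | 0, _+1 => 0
  | _+1, 0 => 0
  | j+1, m+1 => (m+1) * T j (m+1) + T j m

private lemma T_zero_of_lt : ∀ j m, j < m → T j m = 0
  | 0, 0, h => absurd h (by omega)
  | 0, _+1, _ => rfl
  | _+1, 0, h => rfl
  | j+1, m+1, h => by
    simp [T, T_zero_of_lt j (m+1) (by omega), T_zero_of_lt j m (by omega)]

private lemma T_fact : ∀ j m : ℕ, ((m.factorial : ℤ) * (T j m : ℤ)) =
    ∑ l ∈ Finset.range (m + 1), (-1 : ℤ) ^ l * (m.choose l : ℤ) * ((m - l : ℕ) : ℤ) ^ j := by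
  intro j
  induction j with
  | zero =>
    intro m
    have h := Int.alternating_sum_range_choose (n := m)
    match m with
    | 0 => simp [T]
    | m+1 =>
      simp only [pow_zero, mul_one] at *
      rw [h]
      simp [T]
  | succ j ih =>
    intro m
    match m with
    | 0 => simp [T]
    | m+1 =>
      -- key rewriting: (m+1-l)^(j+1) = (m+1)*(m+1-l)^j - l*(m+1-l)^j
      have key : ∀ l ∈ Finset.range (m+2),
          (-1 : ℤ) ^ l * ((m+1).choose l : ℤ) * ((m+1 - l : ℕ) : ℤ) ^ (j+1)
          = (m+1 : ℤ) * ((-1 : ℤ) ^ l * ((m+1).choose l : ℤ) * ((m+1 - l : ℕ) : ℤ) ^ j)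
            - (l : ℤ) * ((m+1).choose l : ℤ) * ((-1 : ℤ) ^ l * ((m+1 - l : ℕ) : ℤ) ^ j) := by
        intro l hl
        simp only [Finset.mem_range] at hl
        have : ((m+1 - l : ℕ) : ℤ) = (m+1 : ℤ) - l := by omega
        rw [pow_succ]
        rw [this]
        ring
      rw [Finset.sum_congr rfl key, Finset.sum_sub_distrib, ← Finset.mul_sum, ← ih (m+1)]
      -- second sum: shift index
      have shift : ∑ l ∈ Finset.range (m+2),
          (l : ℤ) * ((m+1).choose l : ℤ) * ((-1 : ℤ) ^ l * ((m+1 - l : ℕ) : ℤ) ^ j)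
          = ∑ l ∈ Finset.range (m+1),
            ((l+1 : ℕ) : ℤ) * ((m+1).choose (l+1) : ℤ) * ((-1 : ℤ) ^ (l+1) * ((m - l : ℕ) : ℤ) ^ j) := by
        rw [Finset.sum_range_succ' (fun l => (l : ℤ) * ((m+1).choose l : ℤ) * ((-1 : ℤ) ^ l * ((m+1 - l : ℕ) : ℤ) ^ j)) (m+1)]
        simp
      rw [shift]
      have hc : ∀ l : ℕ, ((l+1 : ℕ) : ℤ) * ((m+1).choose (l+1) : ℤ) = (m+1 : ℤ) * (m.choose l : ℤ) := by
        intro l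
        have h : ((m+1).choose (l+1) * (l+1) : ℕ) = (m+1) * m.choose l :=
          (Nat.add_one_mul_choose_eq m l).symm
        rw [mul_comm]
        exact_mod_cast h
      have : ∑ l ∈ Finset.range (m+1),
            ((l+1 : ℕ) : ℤ) * ((m+1).choose (l+1) : ℤ) * ((-1 : ℤ) ^ (l+1) * ((m - l : ℕ) : ℤ) ^ j)
          = -((m+1 : ℤ) * ∑ l ∈ Finset.range (m+1), (-1 : ℤ) ^ l * (m.choose l : ℤ) * ((m - l : ℕ) : ℤ) ^ j) := by
        rw [Finset.mul_sum, ← Finset.sum_neg_distrib]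
        refine Finset.sum_congr rfl fun l _ => ?_
        rw [hc l, pow_succ]
        ring
      rw [this, ← ih m]
      simp only [T]
      push_cast [Nat.factorial_succ]
      ring

private lemma T_zero (j : ℕ) : T (j+1) 0 = 0 := rfl
private lemma T_succ (j m : ℕ) : T (j+1) (m+1) = (m+1) * T j (m+1) + T j m := rfl
private lemma T_00 : T 0 0 = 1 := rfl

open MvPolynomial Finset

private noncomputable def g (N j m : ℕ) : MvPolynomial (Fin 3) ℚ :=
  (-X 0) ^ (j - m) * ((T j m : MvPolynomial (Fin 3) ℚ) *
    (N.descFactorial m : MvPolynomial (Fin 3) ℚ)) * X 1 ^ m * X 2 ^ (N - m)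

private noncomputable def A (N j m : ℕ) : MvPolynomial (Fin 3) ℚ :=
  (-X 0) ^ (j - m) * ((T j m : MvPolynomial (Fin 3) ℚ) *
    (N.descFactorial (m+1) : MvPolynomial (Fin 3) ℚ)) * X 1 ^ (m+1) * X 2 ^ (N - (m+1))

private noncomputable def B (N j m : ℕ) : MvPolynomial (Fin 3) ℚ :=
  (m : MvPolynomial (Fin 3) ℚ) * ((-X 0) ^ ((j+1) - m) * ((T j m : MvPolynomial (Fin 3) ℚ) *
    (N.descFactorial m : MvPolynomial (Fin 3) ℚ)) * X 1 ^ m * X 2 ^ (N - m))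

private lemma estep (N j m : ℕ) (hm : m ≤ j) :
    X 1 * (pderiv (2 : Fin 3) (g N j m) - X 0 * pderiv (1 : Fin 3) (g N j m))
      = A N j m + B N j m := by
  have h02 : (0 : Fin 3) ≠ 2 := by decide
  have h01 : (0 : Fin 3) ≠ 1 := by decide
  have h12 : (1 : Fin 3) ≠ 2 := by decide
  have h21 : (2 : Fin 3) ≠ 1 := by decide
  rcases m with _ | m
  · simp only [g, A, B, pderiv_mul, pderiv_pow, pderiv_X_self, pderiv_X_of_ne h02,
      pderiv_X_of_ne h01, pderiv_X_of_ne h12, pderiv_X_of_ne h21, Derivation.map_natCast, map_neg, pderiv_one, map_mul, map_zero,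
      Nat.sub_sub, Nat.sub_zero, pow_zero, mul_zero, zero_mul, neg_zero, add_zero, zero_add]
    push_cast [Nat.descFactorial_succ, Nat.descFactorial_zero]
    simp only [Nat.sub_zero]
    ring
  · have hj2 : (j + 1) - (m + 1) = (j - (m + 1)) + 1 := by omega
    simp only [g, A, B, pderiv_mul, pderiv_pow, pderiv_X_self, pderiv_X_of_ne h02,
      pderiv_X_of_ne h01, pderiv_X_of_ne h12, pderiv_X_of_ne h21, Derivation.map_natCast, map_neg, pderiv_one, map_mul, map_zero,
      mul_zero, zero_mul, neg_zero, add_zero, zero_add,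
      Nat.sub_sub, Nat.add_sub_cancel, hj2]
    rw [pow_succ]
    push_cast [Nat.descFactorial_succ]
    ring

private lemma pair (N j m : ℕ) (hm : m ≤ j) : A N j m + B N j (m+1) = g N (j+1) (m+1) := by
  have h1 : (j+1) - (m+1) = j - m := by omega
  simp only [A, B, g, h1, T_succ]
  push_cast
  ring

private lemma main_T (N : ℕ) : ∀ j : ℕ,
    (fun f : MvPolynomial (Fin 3) ℚ =>
        X 1 * (pderiv (2 : Fin 3) f - X 0 * pderiv (1 : Fin 3) f))^[j] (X 2 ^ N)
      = ∑ m ∈ Finset.range (j + 1), g N j m := by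
  intro j
  induction j with
  | zero => simp [g, T_00]
  | succ j ih =>
    rw [Function.iterate_succ_apply', ih]
    show (X 1 : MvPolynomial (Fin 3) ℚ) * (pderiv (2:Fin 3) (∑ m ∈ Finset.range (j+1), g N j m)
        - X 0 * pderiv (1:Fin 3) (∑ m ∈ Finset.range (j+1), g N j m)) = _
    rw [map_sum, map_sum, Finset.mul_sum, ← Finset.sum_sub_distrib, Finset.mul_sum]
    rw [Finset.sum_congr rfl (fun m hm => estep N j m (Nat.lt_succ_iff.mp (Finset.mem_range.mp hm)))]
    rw [Finset.sum_add_distrib]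
    have hB : ∑ m ∈ Finset.range (j+1), B N j m = ∑ m ∈ Finset.range (j+1), B N j (m+1) := by
      have b0 : B N j 0 = 0 := by simp [B]
      have bj : B N j (j+1) = 0 := by simp [B, T_zero_of_lt j (j+1) (by omega)]
      rw [Finset.sum_range_succ' (B N j) j, Finset.sum_range_succ (fun m => B N j (m+1)) j,
        b0, bj, add_zero]
    rw [hB, ← Finset.sum_add_distrib]
    rw [Finset.sum_congr rfl (fun m hm => pair N j m (Nat.lt_succ_iff.mp (Finset.mem_range.mp hm)))]
    have g0 : g N (j+1) 0 = 0 := by simp [g, T_zero]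
    rw [Finset.sum_range_succ' (g N (j+1)) (j+1), g0, add_zero]

/-- The computation of `P_{1,1}([p₀])^j([C^{[N]}])` in the proof of Proposition 5.4
(pull-back-prop): in `ℚ[ψ,t,u]` (variables `ψ = X 0`, `t = X 1`, `u = X 2`), with
`e(f) = t·(∂f/∂u − ψ·∂f/∂t)` and `S(j,m)` the Stirling numbers of the second kind
(determined by `m!·S(j,m) = Σ_{l=0}^{m} (−1)^l C(m,l)(m−l)^j`), one has for `j ≤ N`:
`e^j(u^N) = Σ_{m=0}^{j} (−ψ)^{j−m}·S(j,m)·(N!/(N−m)!)·t^m·u^{N−m}`. -/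
theorem stmt18 (S : ℕ → ℕ → ℕ)
    (hS : ∀ j m : ℕ, ((m.factorial : ℤ) * (S j m : ℤ)) =
      ∑ l ∈ Finset.range (m + 1), (-1 : ℤ) ^ l * (m.choose l : ℤ) * ((m - l : ℕ) : ℤ) ^ j)
    (j N : ℕ) (hjN : j ≤ N) :
    (fun f : MvPolynomial (Fin 3) ℚ =>
        MvPolynomial.X 1 *
          (MvPolynomial.pderiv (2 : Fin 3) f -
            MvPolynomial.X 0 * MvPolynomial.pderiv (1 : Fin 3) f))^[j]
        (MvPolynomial.X 2 ^ N) =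
      ∑ m ∈ Finset.range (j + 1),
        (-MvPolynomial.X 0 : MvPolynomial (Fin 3) ℚ) ^ (j - m) *
          ((S j m : MvPolynomial (Fin 3) ℚ) * (N.descFactorial m : MvPolynomial (Fin 3) ℚ)) *
          MvPolynomial.X 1 ^ m * MvPolynomial.X 2 ^ (N - m) := by
  have hST : ∀ j m : ℕ, S j m = T j m := by
    intro j m
    have h := (hS j m).trans (T_fact j m).symm
    have hf : ((m.factorial : ℤ)) ≠ 0 := Int.natCast_ne_zero.mpr m.factorial_ne_zero
    exact_mod_cast mul_left_cancel₀ hf h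
  rw [main_T N j]
  exact Finset.sum_congr rfl fun m _ => by rw [g, hST j m]
end

section
/- Let A be a commutative ring and a₀ ∈ A. Let L be the free A-module of finitely supported functions ℕ×ℕ → A, writing P_{m,k}(a) for the element supported at (m,k) with value a. Define a ℤ-bilinear bracket on L by bilinear extension of [P_{m,k}(a), P_{m',k'}(a')] = Σ_{i≥1} (−1)^{i−1} · i! · (C(k,i)C(m',i) − C(m,i)C(k',i)) · P_{m+m'−i, k+k'−i}(a·a'·a₀^{i−1}) (a finite sum, since the coefficient vanishes unless i ≤ min(k,m') or i ≤ min(m,k')). Then this bracket satisfies [x,x] = 0 for all x and the Jacobi identity [x,[y,z]] + [y,[z,x]] + [z,[x,y]] = 0 for all x, y, z; i.e., it makes L a Lie ring. (This is the Lie algebra D(A,a₀) of the paper in the case of a purely even commutative ring A.) -/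
/-- The ℤ-bilinear bracket on the free `A`-module `L = (ℕ×ℕ) →₀ A` obtained by bilinear
extension of
`[P_{m,k}(a), P_{m',k'}(a')] = Σ_{i≥1} (−1)^{i−1}·i!·(C(k,i)C(m',i) − C(m,i)C(k',i))·
P_{m+m'−i,k+k'−i}(a·a'·a₀^{i−1})`,
where `P_{m,k}(a)` denotes the element supported at `(m,k)` with value `a`.  (The sum is
finite: the coefficient vanishes unless `i ≤ min(k,m')` or `i ≤ min(m,k')`.) -/
noncomputable def Dbracket (A : Type*) [CommRing A] (a₀ : A)
    (x y : (ℕ × ℕ) →₀ A) : (ℕ × ℕ) →₀ A :=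
  x.sum fun p a => y.sum fun q a' =>
    ∑ i ∈ Finset.Icc 1 (p.1 + p.2 + q.1 + q.2),
      ((-1 : ℤ) ^ (i - 1) * (i.factorial : ℤ) *
          ((p.2.choose i : ℤ) * (q.1.choose i : ℤ) -
            (p.1.choose i : ℤ) * (q.2.choose i : ℤ))) •
        Finsupp.single (p.1 + q.1 - i, p.2 + q.2 - i) (a * a' * a₀ ^ (i - 1))

open Polynomial Finset

noncomputable section
variable {R : Type*} [CommRing R]

/-- The operator `c · d/dx` on `R[x]`. -/
def Dop (c : R) : Module.End R (Polynomial R) :=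
  c • (Polynomial.derivative : Polynomial R →ₗ[R] Polynomial R)

/-- Multiplication by `x` on `R[x]`. -/
def Xop (R : Type*) [CommRing R] : Module.End R (Polynomial R) :=
  LinearMap.mulLeft R (Polynomial.X)

lemma Xop_pow_apply (m : ℕ) (p : R[X]) : (Xop R ^ m) p = X ^ m * p := by
  rw [Xop, LinearMap.pow_mulLeft]; rfl

lemma Dop_apply (c : R) (p : R[X]) : Dop c p = c • derivative p := rfl

lemma endMulSmulOne (E : Module.End R (Polynomial R)) (c : R) :
    E * (c • 1) = c • E := by rw [mul_smul_comm, mul_one]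

lemma comm1 (c : R) : Dop c * Xop R = Xop R * Dop c + c • 1 := by
  apply LinearMap.ext; intro p
  simp only [Module.End.mul_apply, LinearMap.add_apply, LinearMap.smul_apply,
    Module.End.one_apply, Dop_apply, Xop, LinearMap.mulLeft_apply, derivative_mul,
    derivative_X, one_mul, smul_add, mul_smul_comm]
  abel

lemma commM (c : R) (m : ℕ) :
    Dop c * Xop R ^ m = Xop R ^ m * Dop c + ((m : R) * c) • Xop R ^ (m - 1) := by
  induction m with
  | zero => simp
  | succ n ih =>
    rw [pow_succ, ← mul_assoc, ih, add_mul, mul_assoc, comm1, mul_add, ← mul_assoc,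
      ← pow_succ, endMulSmulOne, smul_mul_assoc]
    rcases Nat.eq_zero_or_pos n with h | h
    · subst h; simp
    · have h1 : n - 1 + 1 = n := Nat.succ_pred_eq_of_pos h
      rw [← pow_succ, h1, Nat.add_sub_cancel]
      push_cast
      rw [add_mul, one_mul, add_smul]
      abel

lemma commK (c : R) (k m : ℕ) :
    Dop c ^ k * Xop R ^ m =
      ∑ i ∈ Finset.range (k + 1),
        (((k.choose i * m.choose i * i.factorial : ℕ) : R) * c ^ i) •
          (Xop R ^ (m - i) * Dop c ^ (k - i)) := by
  induction k with
  | zero => simp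
  | succ k ih =>
    have step : Dop c ^ (k+1) * Xop R ^ m = Dop c * (Dop c ^ k * Xop R ^ m) := by
      rw [← mul_assoc, ← pow_succ']
    rw [step, ih, Finset.mul_sum]
    have term : ∀ i ∈ Finset.range (k+1),
        Dop c * ((((k.choose i * m.choose i * i.factorial : ℕ) : R) * c ^ i) •
          (Xop R ^ (m - i) * Dop c ^ (k - i)))
        = (((k.choose i * m.choose i * i.factorial : ℕ) : R) * c ^ i) •
            (Xop R ^ (m - i) * Dop c ^ (k + 1 - i))
          + ((((k.choose i * m.choose i * i.factorial * (m - i) : ℕ) : R) * c ^ (i+1))) •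
            (Xop R ^ (m - (i+1)) * Dop c ^ (k + 1 - (i+1))) := by
      intro i hi
      rw [Finset.mem_range] at hi
      have hik : i ≤ k := Nat.lt_succ_iff.mp hi
      have h1 : k - i + 1 = k + 1 - i := by omega
      have h2 : m - i - 1 = m - (i+1) := by omega
      have h3 : k - i = k + 1 - (i + 1) := by omega
      rw [mul_smul_comm, ← mul_assoc, commM, add_mul, smul_mul_assoc,
        mul_assoc (Xop R ^ (m - i)) (Dop c) (Dop c ^ (k - i)), ← pow_succ',
        h1, h2, h3, smul_add, smul_smul]
      congr 2
      push_cast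
      ring
    rw [Finset.sum_congr rfl term, Finset.sum_add_distrib]
    have e1 : ∑ i ∈ Finset.range (k+1),
        (((k.choose i * m.choose i * i.factorial : ℕ) : R) * c ^ i) •
          (Xop R ^ (m - i) * Dop c ^ (k + 1 - i))
        = ∑ i ∈ Finset.range (k+2),
        (((k.choose i * m.choose i * i.factorial : ℕ) : R) * c ^ i) •
          (Xop R ^ (m - i) * Dop c ^ (k + 1 - i)) := by
      rw [Finset.sum_range_succ (n := k+1)]
      simp [Nat.choose_succ_self]
    have e2 : ∑ i ∈ Finset.range (k+1),
        ((((k.choose i * m.choose i * i.factorial * (m - i) : ℕ) : R) * c ^ (i+1))) •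
          (Xop R ^ (m - (i+1)) * Dop c ^ (k + 1 - (i+1)))
        = ∑ i ∈ Finset.range (k+2),
        (if i = 0 then 0 else
          (((k.choose (i-1) * m.choose (i-1) * (i-1).factorial * (m - (i-1)) : ℕ) : R) * c ^ i)) •
          (Xop R ^ (m - i) * Dop c ^ (k + 1 - i)) := by
      rw [Finset.sum_range_succ' (n := k+1)]
      simp
    rw [e1, e2, ← Finset.sum_add_distrib]
    apply Finset.sum_congr rfl
    intro i _
    rw [← add_smul]
    congr 1
    rcases Nat.eq_zero_or_pos i with h | h
    · subst h; simp
    · obtain ⟨j, rfl⟩ : ∃ j, i = j + 1 := ⟨i - 1, by omega⟩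
      simp only [if_neg (Nat.succ_ne_zero j), Nat.add_sub_cancel]
      rw [← add_mul]
      congr 1
      have hc := Nat.choose_succ_right_eq m j
      have key : m.choose j * j.factorial * (m - j) = m.choose (j+1) * (j+1).factorial := by
        calc m.choose j * j.factorial * (m - j) = (m.choose j * (m-j)) * j.factorial := by ring
          _ = (m.choose (j+1) * (j+1)) * j.factorial := by rw [← hc]
          _ = m.choose (j+1) * (j+1).factorial := by rw [Nat.factorial_succ]; ring
      have lhsnat : (k+1).choose (j+1) * m.choose (j+1) * (j+1).factorial
          = k.choose (j+1) * m.choose (j+1) * (j+1).factorial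
            + k.choose j * m.choose j * j.factorial * (m - j) := by
        rw [Nat.choose_succ_succ, add_mul, add_mul,
          show k.choose j * m.choose j * j.factorial * (m - j)
             = k.choose j * (m.choose j * j.factorial * (m - j)) by ring, key]
        ring
      rw [← Nat.cast_add, ← lhsnat]

lemma prodXD (c : R) (m k m' k' : ℕ) :
    (Xop R ^ m * Dop c ^ k) * (Xop R ^ m' * Dop c ^ k') =
      ∑ i ∈ Finset.range (k + 1),
        (((k.choose i * m'.choose i * i.factorial : ℕ) : R) * c ^ i) •
          (Xop R ^ (m + (m' - i)) * Dop c ^ ((k - i) + k')) := by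
  have h : (Xop R ^ m * Dop c ^ k) * (Xop R ^ m' * Dop c ^ k')
      = Xop R ^ m * (Dop c ^ k * Xop R ^ m') * Dop c ^ k' := by
    rw [mul_assoc, ← mul_assoc (Dop c ^ k), ← mul_assoc]
  rw [h, commK, Finset.mul_sum, Finset.sum_mul]
  apply Finset.sum_congr rfl
  intro i _
  rw [mul_smul_comm, smul_mul_assoc]
  congr 1
  rw [← mul_assoc (Xop R ^ m), ← pow_add, mul_assoc, ← pow_add]

/-- The representation of `L` on `R[x]`. -/
def phi (c : R) : ((ℕ × ℕ) →₀ R) →+ Module.End R (Polynomial R) :=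
  Finsupp.liftAddHom fun p =>
    { toFun := fun a => a • (Xop R ^ p.1 * Dop c ^ p.2)
      map_zero' := zero_smul _ _
      map_add' := fun a b => add_smul a b _ }

lemma phi_single (c : R) (p : ℕ × ℕ) (a : R) :
    phi c (Finsupp.single p a) = a • (Xop R ^ p.1 * Dop c ^ p.2) := by
  simp [phi]

lemma sum_shift (c s : R) (m k m' k' N : ℕ) (hkN : k ≤ N) :
    ∑ i ∈ Finset.range (k + 1),
        (s * ((k.choose i * m'.choose i * i.factorial : ℕ) : R) * c ^ i) •
          (Xop R ^ (m + (m' - i)) * Dop c ^ ((k - i) + k'))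
      = s • (Xop R ^ (m + m') * Dop c ^ (k + k')) +
        ∑ i ∈ Finset.Icc 1 N,
          (s * ((k.choose i * m'.choose i * i.factorial : ℕ) : R) * c ^ i) •
            (Xop R ^ (m + m' - i) * Dop c ^ (k + k' - i)) := by
  have hr : Finset.range (k + 1) = insert 0 (Finset.Icc 1 k) := by
    ext i; simp only [Finset.mem_range, Finset.mem_insert, Finset.mem_Icc]; omega
  rw [hr, Finset.sum_insert (by simp)]
  congr 1
  · simp
  · have step1 : ∀ i ∈ Finset.Icc 1 k,
        (s * ((k.choose i * m'.choose i * i.factorial : ℕ) : R) * c ^ i) •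
          (Xop R ^ (m + (m' - i)) * Dop c ^ ((k - i) + k'))
        = (s * ((k.choose i * m'.choose i * i.factorial : ℕ) : R) * c ^ i) •
          (Xop R ^ (m + m' - i) * Dop c ^ (k + k' - i)) := by
      intro i hi
      rw [Finset.mem_Icc] at hi
      obtain ⟨hi1, hik⟩ := hi
      by_cases him : i ≤ m'
      · have e1 : m + (m' - i) = m + m' - i := by omega
        have e2 : k - i + k' = k + k' - i := by omega
        rw [e1, e2]
      · have hz : m'.choose i = 0 := Nat.choose_eq_zero_of_lt (by omega)
        simp [hz]
    rw [Finset.sum_congr rfl step1]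
    apply Finset.sum_subset (Finset.Icc_subset_Icc_right hkN)
    intro i hiN hik
    rw [Finset.mem_Icc] at hiN
    rw [Finset.mem_Icc] at hik
    push_neg at hik
    have hz : k.choose i = 0 := Nat.choose_eq_zero_of_lt (by omega)
    simp [hz]

lemma bracket_single (r₀ : R) (m k m' k' : ℕ) (a b : R) :
    (-r₀) • phi (-r₀)
        (∑ i ∈ Finset.Icc 1 (m + k + m' + k'),
          ((-1 : ℤ) ^ (i - 1) * (i.factorial : ℤ) *
              ((k.choose i : ℤ) * (m'.choose i : ℤ) -
                (m.choose i : ℤ) * (k'.choose i : ℤ))) •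
            Finsupp.single (m + m' - i, k + k' - i) (a * b * r₀ ^ (i - 1)))
      = (a • (Xop R ^ m * Dop (-r₀) ^ k)) * (b • (Xop R ^ m' * Dop (-r₀) ^ k'))
        - (b • (Xop R ^ m' * Dop (-r₀) ^ k')) * (a • (Xop R ^ m * Dop (-r₀) ^ k)) := by
  rw [map_sum, Finset.smul_sum]
  have lhs_eq : ∀ i ∈ Finset.Icc 1 (m + k + m' + k'),
      (-r₀) • (phi (-r₀) ((((-1 : ℤ) ^ (i - 1) * (i.factorial : ℤ) *
              ((k.choose i : ℤ) * (m'.choose i : ℤ) -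
                (m.choose i : ℤ) * (k'.choose i : ℤ)))) •
            Finsupp.single (m + m' - i, k + k' - i) (a * b * r₀ ^ (i - 1))))
      = (a * b * ((k.choose i * m'.choose i * i.factorial : ℕ) : R) * (-r₀) ^ i) •
          (Xop R ^ (m + m' - i) * Dop (-r₀) ^ (k + k' - i))
        - (a * b * ((k'.choose i * m.choose i * i.factorial : ℕ) : R) * (-r₀) ^ i) •
          (Xop R ^ (m + m' - i) * Dop (-r₀) ^ (k + k' - i)) := by
    intro i hi
    rw [Finset.mem_Icc] at hi
    obtain ⟨j, rfl⟩ : ∃ j, i = j + 1 := ⟨i - 1, by omega⟩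
    rw [map_zsmul, phi_single]
    dsimp only
    rw [← Int.cast_smul_eq_zsmul R]
    simp only [Nat.add_sub_cancel]
    match_scalars
    ring
  rw [Finset.sum_congr rfl lhs_eq, Finset.sum_sub_distrib]
  rw [smul_mul_smul_comm, smul_mul_smul_comm, prodXD, prodXD, mul_comm b a,
    Finset.smul_sum, Finset.smul_sum]
  have rhs1 : ∀ i ∈ Finset.range (k + 1),
      (a * b) • ((((k.choose i * m'.choose i * i.factorial : ℕ) : R) * (-r₀) ^ i) •
          (Xop R ^ (m + (m' - i)) * Dop (-r₀) ^ ((k - i) + k')))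
      = (a * b * ((k.choose i * m'.choose i * i.factorial : ℕ) : R) * (-r₀) ^ i) •
          (Xop R ^ (m + (m' - i)) * Dop (-r₀) ^ ((k - i) + k')) := by
    intro i _; rw [smul_smul]; congr 1; ring
  have rhs2 : ∀ i ∈ Finset.range (k' + 1),
      (a * b) • ((((k'.choose i * m.choose i * i.factorial : ℕ) : R) * (-r₀) ^ i) •
          (Xop R ^ (m' + (m - i)) * Dop (-r₀) ^ ((k' - i) + k)))
      = (a * b * ((k'.choose i * m.choose i * i.factorial : ℕ) : R) * (-r₀) ^ i) •
          (Xop R ^ (m' + (m - i)) * Dop (-r₀) ^ ((k' - i) + k)) := by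
    intro i _; rw [smul_smul]; congr 1; ring
  rw [Finset.sum_congr rfl rhs1, Finset.sum_congr rfl rhs2,
    sum_shift (-r₀) (a*b) m k m' k' (m + k + m' + k') (by omega),
    sum_shift (-r₀) (a*b) m' k' m k (m + k + m' + k') (by omega),
    show m' + m = m + m' from add_comm m' m, show k' + k = k + k' from add_comm k' k]
  abel

lemma phi_apply (c : R) (w : (ℕ × ℕ) →₀ R) :
    phi c w = ∑ p ∈ w.support, (w p) • (Xop R ^ p.1 * Dop c ^ p.2) := by
  conv_lhs => rw [← Finsupp.sum_single w, map_finsuppSum]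
  apply Finset.sum_congr rfl
  intro p _
  exact phi_single c p (w p)

lemma phi_smul (c r : R) (w : (ℕ × ℕ) →₀ R) : phi c (r • w) = r • phi c w := by
  rw [phi_apply, phi_apply, Finset.smul_sum]
  rw [Finset.sum_subset Finsupp.support_smul
    (fun p _ hp => by rw [Finsupp.notMem_support_iff.mp hp, zero_smul])]
  apply Finset.sum_congr rfl
  intro p _
  rw [Finsupp.smul_apply, smul_eq_mul, mul_smul]

lemma Dop_pow_Xpow (c : R) (j n : ℕ) :
    (Dop c ^ j) (X ^ n : R[X]) = ((n.descFactorial j : R) * c ^ j) • X ^ (n - j) := by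
  induction j with
  | zero => simp
  | succ j ih =>
    rw [pow_succ', Module.End.mul_apply, ih, map_smul, Dop_apply, derivative_X_pow,
      Nat.descFactorial_succ, ← Polynomial.smul_eq_C_mul]
    rw [show n - j - 1 = n - (j+1) from by omega]
    match_scalars
    ring

lemma phi_injective [IsDomain R] [CharZero R] (c : R) (hc : c ≠ 0)
    (w : (ℕ × ℕ) →₀ R) (h : phi c w = 0) : w = 0 := by
  have H : ∀ k m, w (m, k) = 0 := by
    intro k
    induction k using Nat.strong_induction_on with
    | _ k IH =>
    intro m
    have h0 : (phi c w) (X ^ k : R[X]) = 0 := by rw [h]; rfl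
    rw [phi_apply, LinearMap.sum_apply] at h0
    have hterm : ∀ p ∈ w.support,
        ((w p) • (Xop R ^ p.1 * Dop c ^ p.2)) (X ^ k : R[X])
        = (if p.2 = k then (w p * (k.factorial : R) * c ^ k) else 0) • (X ^ p.1 : R[X]) := by
      intro p hp
      rcases lt_trichotomy p.2 k with hlt | heq | hgt
      · exfalso
        have := IH p.2 hlt p.1
        rw [Finsupp.mem_support_iff] at hp
        exact hp (by simpa using this)
      · rw [LinearMap.smul_apply, Module.End.mul_apply, Dop_pow_Xpow, heq, if_pos rfl,
          Nat.descFactorial_self, Nat.sub_self, pow_zero, map_smul, Xop_pow_apply,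
          mul_one, smul_smul]
        congr 1
        ring
      · rw [LinearMap.smul_apply, Module.End.mul_apply, Dop_pow_Xpow,
          if_neg (by omega), Nat.descFactorial_eq_zero_iff_lt.mpr hgt]
        simp
    rw [Finset.sum_congr rfl hterm] at h0
    have h1 := congrArg (fun q => Polynomial.coeff q m) h0
    simp only [Polynomial.finset_sum_coeff, Polynomial.coeff_smul, Polynomial.coeff_X_pow,
      Polynomial.coeff_zero, smul_eq_mul] at h1
    have conv1 : ∀ p ∈ w.support,
        (if p.2 = k then (w p * (k.factorial : R) * c ^ k) else 0) *
            (if m = p.1 then 1 else 0)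
        = if p = (m, k) then w (m, k) * (k.factorial : R) * c ^ k else 0 := by
      intro p _
      by_cases h2 : p = (m, k)
      · subst h2; simp
      · rw [if_neg h2]
        have : ¬(p.2 = k) ∨ ¬(m = p.1) := by
          by_contra hcon
          push_neg at hcon
          exact h2 (Prod.ext hcon.2.symm hcon.1)
        rcases this with h3 | h3
        · rw [if_neg h3, zero_mul]
        · rw [if_neg h3, mul_zero]
    rw [Finset.sum_congr rfl conv1, Finset.sum_ite_eq' w.support (m, k)] at h1
    have hnz : ((k.factorial : R) * c ^ k) ≠ 0 :=
      mul_ne_zero (Nat.cast_ne_zero.mpr k.factorial_ne_zero) (pow_ne_zero _ hc)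
    by_cases hmem : (m, k) ∈ w.support
    · rw [if_pos hmem] at h1
      have : w (m, k) * ((k.factorial : R) * c ^ k) = 0 := by rw [← mul_assoc]; exact h1
      exact (mul_eq_zero.mp this).resolve_right hnz
    · exact Finsupp.notMem_support_iff.mp hmem
  ext p
  rw [show p = (p.1, p.2) from rfl, H p.2 p.1, Finsupp.coe_zero, Pi.zero_apply]

lemma key (r₀ : R) (x y : (ℕ × ℕ) →₀ R) :
    (-r₀) • phi (-r₀) (Dbracket R r₀ x y)
      = phi (-r₀) x * phi (-r₀) y - phi (-r₀) y * phi (-r₀) x := by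
  rw [Dbracket, map_finsuppSum, Finsupp.smul_sum]
  have main : ∀ p ∈ x.support,
      (-r₀) • phi (-r₀) (y.sum fun q b =>
        ∑ i ∈ Finset.Icc 1 (p.1 + p.2 + q.1 + q.2),
          ((-1 : ℤ) ^ (i - 1) * (i.factorial : ℤ) *
              ((p.2.choose i : ℤ) * (q.1.choose i : ℤ) -
                (p.1.choose i : ℤ) * (q.2.choose i : ℤ))) •
            Finsupp.single (p.1 + q.1 - i, p.2 + q.2 - i) (x p * b * r₀ ^ (i - 1)))
      = ∑ q ∈ y.support,
          (((x p) • (Xop R ^ p.1 * Dop (-r₀) ^ p.2)) * ((y q) • (Xop R ^ q.1 * Dop (-r₀) ^ q.2))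
            - ((y q) • (Xop R ^ q.1 * Dop (-r₀) ^ q.2)) * ((x p) • (Xop R ^ p.1 * Dop (-r₀) ^ p.2))) := by
    intro p _
    rw [map_finsuppSum, Finsupp.smul_sum]
    apply Finset.sum_congr rfl
    intro q _
    exact bracket_single r₀ p.1 p.2 q.1 q.2 (x p) (y q)
  rw [Finsupp.sum, Finset.sum_congr rfl main]
  rw [phi_apply, phi_apply, Finset.sum_mul_sum, Finset.sum_mul_sum,
    Finset.sum_comm (s := y.support) (t := x.support), ← Finset.sum_sub_distrib]
  apply Finset.sum_congr rfl
  intro p _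
  rw [← Finset.sum_sub_distrib]

theorem jacobiR [IsDomain R] [CharZero R] (r₀ : R) (hr : r₀ ≠ 0) :
    (∀ x : (ℕ × ℕ) →₀ R, Dbracket R r₀ x x = 0) ∧
    (∀ x y z : (ℕ × ℕ) →₀ R,
      Dbracket R r₀ x (Dbracket R r₀ y z) + Dbracket R r₀ y (Dbracket R r₀ z x) +
        Dbracket R r₀ z (Dbracket R r₀ x y) = 0) := by
  have hc : (-r₀ : R) ≠ 0 := neg_ne_zero.mpr hr
  constructor
  · intro x
    have h := key r₀ x x
    rw [sub_self] at h
    have h2 : phi (-r₀) ((-r₀) • Dbracket R r₀ x x) = 0 := by rw [phi_smul, h]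
    have h3 := phi_injective (-r₀) hc _ h2
    exact (smul_eq_zero.mp h3).resolve_left hc
  · intro x y z
    have e : ∀ u v v' : (ℕ × ℕ) →₀ R,
        phi (-r₀) ((-r₀) • (-r₀) • Dbracket R r₀ u (Dbracket R r₀ v v'))
          = phi (-r₀) u * (phi (-r₀) v * phi (-r₀) v' - phi (-r₀) v' * phi (-r₀) v)
            - (phi (-r₀) v * phi (-r₀) v' - phi (-r₀) v' * phi (-r₀) v) * phi (-r₀) u := by
      intro u v v'
      rw [phi_smul, phi_smul, key, smul_sub, ← mul_smul_comm, ← smul_mul_assoc, key]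
    have sum0 : phi (-r₀) ((-r₀) • (-r₀) •
        (Dbracket R r₀ x (Dbracket R r₀ y z) + Dbracket R r₀ y (Dbracket R r₀ z x) +
          Dbracket R r₀ z (Dbracket R r₀ x y))) = 0 := by
      rw [smul_add, smul_add, smul_add, smul_add, map_add, map_add, e, e, e]
      generalize phi (-r₀) x = px
      generalize phi (-r₀) y = py
      generalize phi (-r₀) z = pz
      simp only [mul_sub, sub_mul, mul_assoc]
      abel
    have h3 := phi_injective (-r₀) hc _ sum0
    have h4 := (smul_eq_zero.mp h3).resolve_left hc
    exact (smul_eq_zero.mp h4).resolve_left hc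

end

section transfer

variable {R A : Type*} [CommRing R] [CommRing A]

lemma Dbracket_map (f : R →+* A) (r₀ : R) (x y : (ℕ × ℕ) →₀ R) :
    Dbracket A (f r₀) (x.mapRange f f.map_zero) (y.mapRange f f.map_zero)
      = (Dbracket R r₀ x y).mapRange f f.map_zero := by
  rw [Dbracket, Dbracket]
  rw [Finsupp.sum_mapRange_index (by intro p; simp)]
  have inner : ∀ (p : ℕ × ℕ) (a : R),
      (y.mapRange f f.map_zero).sum (fun q b =>
        ∑ i ∈ Finset.Icc 1 (p.1 + p.2 + q.1 + q.2),
          ((-1 : ℤ) ^ (i - 1) * (i.factorial : ℤ) *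
              ((p.2.choose i : ℤ) * (q.1.choose i : ℤ) -
                (p.1.choose i : ℤ) * (q.2.choose i : ℤ))) •
            Finsupp.single (p.1 + q.1 - i, p.2 + q.2 - i) (f a * b * (f r₀) ^ (i - 1)))
      = y.sum fun q b =>
        ∑ i ∈ Finset.Icc 1 (p.1 + p.2 + q.1 + q.2),
          ((-1 : ℤ) ^ (i - 1) * (i.factorial : ℤ) *
              ((p.2.choose i : ℤ) * (q.1.choose i : ℤ) -
                (p.1.choose i : ℤ) * (q.2.choose i : ℤ))) •
            Finsupp.single (p.1 + q.1 - i, p.2 + q.2 - i) (f a * f b * (f r₀) ^ (i - 1)) := by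
    intro p a
    exact Finsupp.sum_mapRange_index (by intro q; simp)
  simp only [inner]
  rw [show (Finsupp.mapRange (α := ℕ × ℕ) f f.map_zero)
      = ⇑(Finsupp.mapRange.addMonoidHom f.toAddMonoidHom) from rfl, map_finsuppSum]
  apply Finsupp.sum_congr
  intro p _
  rw [map_finsuppSum]
  apply Finsupp.sum_congr
  intro q _
  rw [map_sum]
  apply Finset.sum_congr rfl
  intro i _
  rw [map_zsmul, Finsupp.mapRange.addMonoidHom_apply, Finsupp.mapRange_single]
  congr 1
  simp [map_mul, map_pow]

lemma mapRange_lift (f : R →+* A) (x : (ℕ × ℕ) →₀ A) (u : (ℕ × ℕ) → R)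
    (hu : ∀ p ∈ x.support, f (u p) = x p) :
    Finsupp.mapRange f f.map_zero (∑ p ∈ x.support, Finsupp.single p (u p)) = x := by
  rw [show (Finsupp.mapRange (α := ℕ × ℕ) f f.map_zero)
      = ⇑(Finsupp.mapRange.addMonoidHom f.toAddMonoidHom) from rfl, map_sum]
  simp only [Finsupp.mapRange.addMonoidHom_apply, Finsupp.mapRange_single]
  have hconv : ∀ p ∈ x.support,
      (Finsupp.single p (f.toAddMonoidHom (u p)) : (ℕ × ℕ) →₀ A)
        = Finsupp.single p (x p) := fun p hp => by
    rw [show (f.toAddMonoidHom (u p) : A) = f (u p) from rfl, hu p hp]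
  rw [Finset.sum_congr rfl hconv]
  conv_rhs => rw [← Finsupp.sum_single x]
  rfl

end transfer

/-- The bracket above makes `L` a Lie ring: it is alternating and satisfies the Jacobi
identity.  (This is the Lie algebra `D(A,a₀)` of the paper for a purely even
commutative ring `A`.) -/
theorem stmt19 (A : Type*) [CommRing A] (a₀ : A) :
    (∀ x : (ℕ × ℕ) →₀ A, Dbracket A a₀ x x = 0) ∧
    (∀ x y z : (ℕ × ℕ) →₀ A,
      Dbracket A a₀ x (Dbracket A a₀ y z) + Dbracket A a₀ y (Dbracket A a₀ z x) +
        Dbracket A a₀ z (Dbracket A a₀ x y) = 0) := by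
  classical
  constructor
  · intro x
    let σ := Option ((ℕ × ℕ) × Fin 3)
    let v : σ → A := fun s => match s with
      | none => a₀
      | some (p, _) => x p
    let f : MvPolynomial σ ℤ →+* A := (MvPolynomial.aeval v).toRingHom
    let xt : (ℕ × ℕ) →₀ MvPolynomial σ ℤ :=
      ∑ p ∈ x.support, Finsupp.single p (MvPolynomial.X (some (p, 0)))
    have hx : Finsupp.mapRange f f.map_zero xt = x :=
      mapRange_lift f x _ (fun p _ => by simp [f, v])
    have ha : f (MvPolynomial.X (none : σ)) = a₀ := by simp [f, v]
    have h0 := (jacobiR (R := MvPolynomial σ ℤ) (MvPolynomial.X none)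
      (MvPolynomial.X_ne_zero _)).1 xt
    calc Dbracket A a₀ x x
        = Dbracket A (f (MvPolynomial.X none)) (Finsupp.mapRange f f.map_zero xt)
            (Finsupp.mapRange f f.map_zero xt) := by rw [hx, ha]
      _ = (Dbracket _ (MvPolynomial.X none) xt xt).mapRange f f.map_zero :=
          Dbracket_map f _ xt xt
      _ = 0 := by rw [h0]; exact Finsupp.mapRange_zero
  · intro x y z
    let σ := Option ((ℕ × ℕ) × Fin 3)
    let v : σ → A := fun s => match s with
      | none => a₀
      | some (p, i) => ![x p, y p, z p] i
    let f : MvPolynomial σ ℤ →+* A := (MvPolynomial.aeval v).toRingHom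
    let xt : (ℕ × ℕ) →₀ MvPolynomial σ ℤ :=
      ∑ p ∈ x.support, Finsupp.single p (MvPolynomial.X (some (p, 0)))
    let yt : (ℕ × ℕ) →₀ MvPolynomial σ ℤ :=
      ∑ p ∈ y.support, Finsupp.single p (MvPolynomial.X (some (p, 1)))
    let zt : (ℕ × ℕ) →₀ MvPolynomial σ ℤ :=
      ∑ p ∈ z.support, Finsupp.single p (MvPolynomial.X (some (p, 2)))
    have hx : Finsupp.mapRange f f.map_zero xt = x :=
      mapRange_lift f x _ (fun p _ => by simp [f, v])
    have hy : Finsupp.mapRange f f.map_zero yt = y :=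
      mapRange_lift f y _ (fun p _ => by simp [f, v])
    have hz : Finsupp.mapRange f f.map_zero zt = z :=
      mapRange_lift f z _ (fun p _ => by simp [f, v])
    have ha : f (MvPolynomial.X (none : σ)) = a₀ := by simp [f, v]
    have h0 := (jacobiR (R := MvPolynomial σ ℤ) (MvPolynomial.X none)
      (MvPolynomial.X_ne_zero _)).2 xt yt zt
    have expand : ∀ (u u' : (ℕ × ℕ) →₀ MvPolynomial σ ℤ),
        Dbracket A a₀ (Finsupp.mapRange f f.map_zero u) (Finsupp.mapRange f f.map_zero u')
          = (Dbracket _ (MvPolynomial.X none) u u').mapRange f f.map_zero := by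
      intro u u'
      rw [← ha]
      exact Dbracket_map f _ u u'
    rw [← hx, ← hy, ← hz, expand, expand, expand, expand, expand, expand,
      ← Finsupp.mapRange_add f.map_add, ← Finsupp.mapRange_add f.map_add, h0]
    exact Finsupp.mapRange_zero
end
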